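/- arXiv:1005.0038 — 8 statements merged into one kernel-verified Lean document; each statement's English description precedes it below -/
import Mathlib

section
/- Let {X,N} and {X',N'} be two solutions of Tsirelson's equation with the same noise law μ. If X_k and X'_k have the same law on S for every k ∈ -ℕ, then the two solutions are identical in law, i.e., the laws of (X,N) and (X',N') on S^{-ℕ} × Σ^{-ℕ} coincide. -/
open MeasureTheory ProbabilityTheory Filter Topology
open scoped NNReal ENNReal

universe u v w w₂

noncomputable section

/-- The sub-σ-field generated by the process `Y` from index `k` on; since index `j : ℕ`
stands for time `-j`, this is the σ-field of the past `σ(Y_j : j ≤ -k)`. -/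
def past {Ω α : Type*} [MeasurableSpace α] (Y : ℕ → Ω → α) (k : ℕ) : MeasurableSpace Ω :=
  ⨆ j ≥ k, MeasurableSpace.comap (Y j) inferInstance

/-- A solution of Tsirelson's equation with noise law `μ`.  The index `k : ℕ` stands for the
time `-k ∈ -ℕ`, so that time `k - 1` corresponds to index `k + 1`. -/
structure IsSolution {Ω S G : Type*} [MeasurableSpace Ω] [MeasurableSpace S] [MeasurableSpace G]
    [SMul G S] (P : Measure Ω) (μ : ℕ → Measure G)
    (X : ℕ → Ω → S) (N : ℕ → Ω → G) : Prop where
  measurable_X : ∀ k, Measurable (X k)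
  measurable_N : ∀ k, Measurable (N k)
  eqn : ∀ k, X k =ᵐ[P] fun ω => N k ω • X (k + 1) ω
  indep : ∀ k, Indep (MeasurableSpace.comap (N k) inferInstance)
      (past X (k + 1) ⊔ past N (k + 1)) P
  law_N : ∀ k, P.map (N k) = μ k

/-- The joint law of `(X, N)` on the path space `S^{-ℕ} × Σ^{-ℕ}`. -/
def jointLaw {Ω S G : Type*} [MeasurableSpace Ω] [MeasurableSpace S] [MeasurableSpace G]
    (P : Measure Ω) (X : ℕ → Ω → S) (N : ℕ → Ω → G) : Measure ((ℕ → S) × (ℕ → G)) :=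
  P.map fun ω => (fun k => X k ω, fun k => N k ω)

/-- A solution is strong if each `X k` is a.s. equal to a `past N k`-measurable function,
i.e. `X k` is measurable for the `P`-completion of `σ(N_j : j ≤ -k)`. -/
def IsStrong {Ω S G : Type*} [MeasurableSpace Ω] [MeasurableSpace S] [MeasurableSpace G]
    (P : Measure Ω) (X : ℕ → Ω → S) (N : ℕ → Ω → G) : Prop :=
  ∀ k, ∃ Y : Ω → S, Measurable[past N k] Y ∧ X k =ᵐ[P] Y

/-- Triviality of the tail σ-field `⨅ k, m k`. -/
def TailTrivial {Ω : Type*} [MeasurableSpace Ω] (P : Measure Ω)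
    (m : ℕ → MeasurableSpace Ω) : Prop :=
  ∀ A : Set Ω, MeasurableSet[⨅ k, m k] A → P A = 0 ∨ P A = 1

/-- Convolution `μ * ν` of a measure on the acting semigroup with a measure on the space:
the pushforward of `μ ⊗ ν` under the action map. -/
def conv {G S : Type*} [MeasurableSpace G] [MeasurableSpace S] [SMul G S]
    (μ : Measure G) (ν : Measure S) : Measure S :=
  (μ.prod ν).map fun p => p.1 • p.2

/-- Convolution of two measures on the semigroup. -/
def convG {G : Type*} [MeasurableSpace G] [Mul G] (μ ν : Measure G) : Measure G :=
  (μ.prod ν).map fun p => p.1 * p.2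

/-- `prodN N n j = N_n · N_{n+1} · ⋯ · N_{n+j}`; in the time-indexing of the paper (index `m`
is time `-m`) this is `N_{k,l}` with `k = -n` and `l = -(n+j)-1 → -∞` as `j → ∞`. -/
def prodN {Ω G : Type*} [Mul G] (N : ℕ → Ω → G) (n : ℕ) : ℕ → Ω → G
  | 0 => N n
  | j + 1 => fun ω => prodN N n j ω * N (n + j + 1) ω

/-- `convIter μ n j = μ_n * μ_{n+1} * ⋯ * μ_{n+j}`, the law analogue of `prodN`. -/
def convIter {G : Type*} [MeasurableSpace G] [Mul G] (μ : ℕ → Measure G) (n : ℕ) :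
    ℕ → Measure G
  | 0 => μ n
  | j + 1 => convG (convIter μ n j) (μ (n + j + 1))

/-- `sigPow G n` is `Σ^{n+1}`, the set of products of `n+1` elements of `Σ = G`. -/
def sigPow (G : Type*) [Mul G] : ℕ → Set G
  | 0 => Set.univ
  | n + 1 => Set.image2 (· * ·) (sigPow G n) Set.univ

/-- Two sub-σ-fields are equal up to `P`-null sets. -/
def EqModNull {Ω : Type*} [MeasurableSpace Ω] (P : Measure Ω)
    (m₁ m₂ : MeasurableSpace Ω) : Prop :=
  (∀ A, MeasurableSet[m₁] A → ∃ B, MeasurableSet[m₂] B ∧ P (symmDiff A B) = 0) ∧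
  (∀ B, MeasurableSet[m₂] B → ∃ A, MeasurableSet[m₁] A ∧ P (symmDiff A B) = 0)

end

/-! Index `n` stands for time `-n`. Iterating the independence axiom makes `(N_0, …, N_{n-1})`
independent of `σ(X_j, N_j : j ≥ n)`. Hence its law is the same for every solution with noise law
`μ` (induction on `n`, since `N_n` is independent of `(N_0, …, N_{n-1})`), and it is independent
of `X_n`, so the law of `(X_n, N_0, …, N_{n-1})` only depends on `μ` and on the law of `X_n`.
Unrolling `X_j = N_j • X_{j+1}` writes `(X_j, N_j)_{j < n}` as one fixed measurable function of
`(X_n, N_0, …, N_{n-1})`, so the two solutions have the same finite-dimensional laws, and these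
determine the law on path space. -/

open MeasurableSpace

section Past

variable {Ω α : Type*} [MeasurableSpace α]

lemma comap_le_past (Y : ℕ → Ω → α) {k j : ℕ} (h : k ≤ j) :
    MeasurableSpace.comap (Y j) inferInstance ≤ past Y k :=
  le_iSup₂ (f := fun j (_ : j ≥ k) => MeasurableSpace.comap (Y j) inferInstance) j h

lemma past_antitone (Y : ℕ → Ω → α) : Antitone (past Y) :=
  fun _ _ h => iSup₂_le fun _ hj => comap_le_past Y (h.trans hj)

lemma past_le [MeasurableSpace Ω] {Y : ℕ → Ω → α} (hY : ∀ j, Measurable (Y j)) (k : ℕ) :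
    past Y k ≤ ‹MeasurableSpace Ω› :=
  iSup₂_le fun j _ => (hY j).comap_le

end Past

lemma generateFrom_inter_eq_sup {Ω : Type*} (m₁ m₂ : MeasurableSpace Ω) :
    generateFrom {s | ∃ a b, MeasurableSet[m₁] a ∧ MeasurableSet[m₂] b ∧ s = a ∩ b} = m₁ ⊔ m₂ := by
  refine le_antisymm (generateFrom_le ?_) (sup_le (fun s hs => ?_) (fun s hs => ?_))
  · rintro s ⟨a, b, ha, hb, rfl⟩
    exact (le_sup_left (b := m₂) a ha).inter (le_sup_right (a := m₁) b hb)
  · exact measurableSet_generateFrom ⟨s, Set.univ, hs, .univ, (Set.inter_univ s).symm⟩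
  · exact measurableSet_generateFrom ⟨Set.univ, s, .univ, hs, (Set.univ_inter s).symm⟩

lemma indep_sup_of_indep_sup {Ω : Type*} {mΩ : MeasurableSpace Ω} {P : Measure Ω}
    [IsZeroOrProbabilityMeasure P] {m₁ m₂ m₃ : MeasurableSpace Ω}
    (h₁ : m₁ ≤ mΩ) (h₂ : m₂ ≤ mΩ) (h₃ : m₃ ≤ mΩ)
    (h₁₂₃ : Indep m₁ (m₂ ⊔ m₃) P) (h₂₃ : Indep m₂ m₃ P) : Indep (m₁ ⊔ m₂) m₃ P := by
  refine IndepSets.indep (sup_le h₁ h₂) h₃ ?_ (@isPiSystem_measurableSet Ω m₃)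
    (generateFrom_inter_eq_sup m₁ m₂).symm generateFrom_measurableSet.symm ?_
  · rintro s ⟨a, b, ha, hb, rfl⟩ t ⟨a', b', ha', hb', rfl⟩ -
    exact ⟨a ∩ a', b ∩ b', ha.inter ha', hb.inter hb', by ac_rfl⟩
  · rw [IndepSets_iff]
    rintro _ c ⟨a, b, ha, hb, rfl⟩ hc
    have h₁₂₃ := (Indep_iff _ _ _).mp h₁₂₃
    have hb' : MeasurableSet[m₂ ⊔ m₃] b := le_sup_left (b := m₃) b hb
    have hc' : MeasurableSet[m₂ ⊔ m₃] c := le_sup_right (a := m₂) c hc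
    calc P (a ∩ b ∩ c) = P a * P (b ∩ c) := by
          rw [Set.inter_assoc]; exact h₁₂₃ a _ ha (hb'.inter hc')
      _ = P (a ∩ b) * P c := by
          rw [(Indep_iff _ _ _).mp h₂₃ b c hb hc, h₁₂₃ a b ha hb', mul_assoc]

lemma measurable_snoc {α : Type*} [MeasurableSpace α] (n : ℕ) :
    Measurable fun p : (Fin n → α) × α => (Fin.snoc p.1 p.2 : Fin (n + 1) → α) := by
  refine measurable_pi_lambda _ fun i => ?_
  induction i using Fin.lastCases with
  | last => simpa only [Fin.snoc_last] using measurable_snd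
  | cast j => simpa only [Fin.snoc_castSucc] using measurable_fst.eval

lemma finRestrict_succ_eq_snoc {Ω α : Type*} (M : ℕ → Ω → α) (n : ℕ) :
    (fun ω (i : Fin (n + 1)) => M i ω) = fun ω => Fin.snoc (fun i : Fin n => M i ω) (M n ω) :=
  funext fun _ => (Fin.snoc_init_self _).symm

lemma identDistrib_of_forall_fin_identDistrib {Ω Ω' α : Type*} [MeasurableSpace Ω]
    [MeasurableSpace Ω'] [MeasurableSpace α] {P : Measure Ω} {P' : Measure Ω'}
    [IsFiniteMeasure P] {Z : ℕ → Ω → α} {Z' : ℕ → Ω' → α}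
    (h : ∀ n, IdentDistrib (fun ω (i : Fin n) => Z i ω) (fun ω (i : Fin n) => Z' i ω) P P') :
    IdentDistrib (fun ω => (Z · ω)) (fun ω => (Z' · ω)) P P' := by
  have hZ : AEMeasurable (fun ω => (Z · ω)) P := aemeasurable_pi_lambda _ fun k =>
    (measurable_pi_apply (Fin.last k)).comp_aemeasurable (h (k + 1)).aemeasurable_fst
  have hZ' : AEMeasurable (fun ω => (Z' · ω)) P' := aemeasurable_pi_lambda _ fun k =>
    (measurable_pi_apply (Fin.last k)).comp_aemeasurable (h (k + 1)).aemeasurable_snd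
  refine ⟨hZ, hZ', (isProjectiveLimit_map hZ).unique fun I => ?_⟩
  have hI : ∀ i ∈ I, i < I.sup id + 1 := fun i hi => Nat.lt_succ_of_le (I.le_sup (f := id) hi)
  have hres : Measurable fun (v : Fin (I.sup id + 1) → α) (i : I) => v ⟨i, hI i i.2⟩ :=
    measurable_pi_lambda _ fun i => measurable_pi_apply _
  rw [AEMeasurable.map_map_of_aemeasurable (Finset.measurable_restrict _).aemeasurable hZ']
  exact ((h _).comp hres).map_eq.symm

section Reconstruction

variable {S G : Type*} [MeasurableSpace S] [MeasurableSpace G] [SMul G S]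

/-- The path `(x_0, …, x_{n-1})` with `x_j = g_j • x_{j+1}`, where `x_n = x`. -/
def reconstruct : (n : ℕ) → S → (Fin n → G) → Fin n → S
  | 0, _, _ => Fin.elim0
  | n + 1, x, g => Fin.snoc (reconstruct n (g (Fin.last n) • x) (Fin.init g)) (g (Fin.last n) • x)

lemma measurable_reconstruct [MeasurableSMul₂ G S] :
    ∀ n, Measurable fun p : S × (Fin n → G) => reconstruct n p.1 p.2
  | 0 => measurable_const' fun _ _ => Subsingleton.elim _ _
  | n + 1 => by
    have hx : Measurable fun p : S × (Fin (n + 1) → G) => p.2 (Fin.last n) • p.1 :=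
      measurable_snd.eval.smul measurable_fst
    have hinit : Measurable fun p : S × (Fin (n + 1) → G) => (Fin.init p.2 : Fin n → G) :=
      measurable_pi_lambda _ fun i => measurable_snd.eval
    exact (measurable_snoc n).comp (((measurable_reconstruct n).comp (hx.prodMk hinit)).prodMk hx)

namespace IsSolution

variable {Ω Ω' : Type*} [MeasurableSpace Ω] [MeasurableSpace Ω']
  {P : Measure Ω} {P' : Measure Ω'} {μ : ℕ → Measure G}
  {X : ℕ → Ω → S} {N : ℕ → Ω → G} {X' : ℕ → Ω' → S} {N' : ℕ → Ω' → G}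

lemma measurable_Nvec (hsol : IsSolution P μ X N) (n : ℕ) :
    Measurable fun ω (i : Fin n) => N i ω :=
  measurable_pi_lambda _ fun i => hsol.measurable_N i

lemma ae_eq_reconstruct (hsol : IsSolution P μ X N) :
    ∀ n, ∀ᵐ ω ∂P, (fun i : Fin n => X i ω) = reconstruct n (X n ω) (fun i => N i ω)
  | 0 => ae_of_all _ fun _ => Subsingleton.elim _ _
  | n + 1 => by
    filter_upwards [hsol.ae_eq_reconstruct n, hsol.eqn n] with ω ih h
    rw [reconstruct, ← Fin.snoc_init_self (fun i : Fin (n + 1) => X i ω)]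
    exact congrArg₂ _ (ih.trans (congrArg (reconstruct n · _) h)) h

lemma finPath_ae_eq (hsol : IsSolution P μ X N) (n : ℕ) :
    (fun ω (i : Fin n) => (X i ω, N i ω)) =ᵐ[P]
      (fun p (i : Fin n) => (reconstruct n p.1 p.2 i, p.2 i)) ∘
        fun ω => (X n ω, fun i : Fin n => N i ω) := by
  filter_upwards [hsol.ae_eq_reconstruct n] with ω h
  exact funext fun i => Prod.ext (congrFun h i) rfl

section Independence

variable [IsZeroOrProbabilityMeasure P]

lemma indep_Nvec (hsol : IsSolution P μ X N) :
    ∀ n, Indep (MeasurableSpace.comap (fun ω (i : Fin n) => N i ω) inferInstance)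
      (past X n ⊔ past N n) P
  | 0 => by
    have : MeasurableSpace.comap (fun ω (i : Fin 0) => N i ω) inferInstance = ⊥ := by
      rw [Subsingleton.elim (fun ω (i : Fin 0) => N i ω) fun _ => Fin.elim0, comap_const]
    rw [this]
    exact indep_bot_left _
  | n + 1 => by
    have hpast : past X (n + 1) ⊔ past N (n + 1) ≤ past X n ⊔ past N n :=
      sup_le_sup (past_antitone X n.le_succ) (past_antitone N n.le_succ)
    have hNn : MeasurableSpace.comap (N n) inferInstance ≤ past X n ⊔ past N n :=
      (comap_le_past N le_rfl).trans le_sup_right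
    have key := indep_sup_of_indep_sup (hsol.measurable_Nvec n).comap_le
      (hsol.measurable_N n).comap_le
      ((sup_le (past_le hsol.measurable_X _) (past_le hsol.measurable_N _)).trans' hpast)
      (indep_of_indep_of_le_right (hsol.indep_Nvec n) (sup_le hNn hpast)) (hsol.indep n)
    refine indep_of_indep_of_le_left key (Measurable.comap_le ?_)
    rw [finRestrict_succ_eq_snoc]
    exact (measurable_snoc n).comp
      ((Measurable.of_comap_le le_sup_left).prodMk (Measurable.of_comap_le le_sup_right))

lemma indepFun_Nvec_X (hsol : IsSolution P μ X N) (n : ℕ) :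
    IndepFun (fun ω (i : Fin n) => N i ω) (X n) P :=
  indep_of_indep_of_le_right (hsol.indep_Nvec n) ((comap_le_past X le_rfl).trans le_sup_left)

lemma indepFun_Nvec_N (hsol : IsSolution P μ X N) (n : ℕ) :
    IndepFun (fun ω (i : Fin n) => N i ω) (N n) P :=
  indep_of_indep_of_le_right (hsol.indep_Nvec n) ((comap_le_past N le_rfl).trans le_sup_right)

end Independence

variable [IsProbabilityMeasure P] [IsProbabilityMeasure P']

lemma identDistrib_Nvec (hsol : IsSolution P μ X N) (hsol' : IsSolution P' μ X' N') :
    ∀ n, IdentDistrib (fun ω (i : Fin n) => N i ω) (fun ω (i : Fin n) => N' i ω) P P'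
  | 0 => by
    refine ⟨(hsol.measurable_Nvec 0).aemeasurable, (hsol'.measurable_Nvec 0).aemeasurable, ?_⟩
    rw [Subsingleton.elim (fun ω (i : Fin 0) => N i ω) fun _ => Fin.elim0,
      Subsingleton.elim (fun ω (i : Fin 0) => N' i ω) fun _ => Fin.elim0,
      Measure.map_const, Measure.map_const, measure_univ, measure_univ]
  | n + 1 => by
    have hNn : IdentDistrib (N n) (N' n) P P' :=
      ⟨(hsol.measurable_N n).aemeasurable, (hsol'.measurable_N n).aemeasurable,
        (hsol.law_N n).trans (hsol'.law_N n).symm⟩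
    rw [finRestrict_succ_eq_snoc N, finRestrict_succ_eq_snoc N']
    exact ((identDistrib_Nvec hsol hsol' n).prodMk hNn (hsol.indepFun_Nvec_N n)
      (hsol'.indepFun_Nvec_N n)).comp (measurable_snoc n)

lemma identDistrib_X_Nvec (hsol : IsSolution P μ X N) (hsol' : IsSolution P' μ X' N') (n : ℕ)
    (hmarg : P.map (X n) = P'.map (X' n)) :
    IdentDistrib (fun ω => (X n ω, fun i : Fin n => N i ω))
      (fun ω => (X' n ω, fun i : Fin n => N' i ω)) P P' :=
  (IdentDistrib.prodMk (identDistrib_Nvec hsol hsol' n)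
    ⟨(hsol.measurable_X n).aemeasurable, (hsol'.measurable_X n).aemeasurable, hmarg⟩
    (hsol.indepFun_Nvec_X n) (hsol'.indepFun_Nvec_X n)).comp measurable_swap

lemma identDistrib_finPath [MeasurableSMul₂ G S] (hsol : IsSolution P μ X N)
    (hsol' : IsSolution P' μ X' N') (n : ℕ) (hmarg : P.map (X n) = P'.map (X' n)) :
    IdentDistrib (fun ω (i : Fin n) => (X i ω, N i ω)) (fun ω (i : Fin n) => (X' i ω, N' i ω))
      P P' := by
  have hF : Measurable fun (p : S × (Fin n → G)) (i : Fin n) => (reconstruct n p.1 p.2 i, p.2 i) :=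
    measurable_pi_lambda _ fun i => (measurable_reconstruct n).eval.prodMk measurable_snd.eval
  have hpath : Measurable fun ω (i : Fin n) => (X i ω, N i ω) :=
    measurable_pi_lambda _ fun i => (hsol.measurable_X i).prodMk (hsol.measurable_N i)
  have hpath' : Measurable fun ω (i : Fin n) => (X' i ω, N' i ω) :=
    measurable_pi_lambda _ fun i => (hsol'.measurable_X i).prodMk (hsol'.measurable_N i)
  exact (IdentDistrib.of_ae_eq hpath.aemeasurable (hsol.finPath_ae_eq n)).trans
    (((hsol.identDistrib_X_Nvec hsol' n hmarg).comp hF).trans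
      (IdentDistrib.of_ae_eq hpath'.aemeasurable (hsol'.finPath_ae_eq n)).symm)

end IsSolution

end Reconstruction

section Tsirelson

variable {S : Type u} {G : Type v}
  [TopologicalSpace S] [CompactSpace S] [TopologicalSpace.MetrizableSpace S]
  [SecondCountableTopology S] [MeasurableSpace S] [BorelSpace S]
  [TopologicalSpace G] [CompactSpace G] [TopologicalSpace.MetrizableSpace G]
  [SecondCountableTopology G] [MeasurableSpace G] [BorelSpace G]
  [Semigroup G] [ContinuousMul G]
  [SMul G S] [ContinuousSMul G S] [IsScalarTower G G S]

theorem tsirelson_eq_in_law_of_marginals_eq_general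
    {Ω : Type w} {Ω' : Type w₂} [MeasurableSpace Ω] [MeasurableSpace Ω']
    (P : Measure Ω) (P' : Measure Ω') [IsProbabilityMeasure P] [IsProbabilityMeasure P']
    (μ : ℕ → Measure G)
    (X : ℕ → Ω → S) (N : ℕ → Ω → G) (X' : ℕ → Ω' → S) (N' : ℕ → Ω' → G)
    (hsol : IsSolution P μ X N) (hsol' : IsSolution P' μ X' N')
    (hmarg : ∀ k, P.map (X k) = P'.map (X' k)) :
    jointLaw P X N = jointLaw P' X' N' := by
  have hZ := identDistrib_of_forall_fin_identDistrib (Z := fun k ω => (X k ω, N k ω))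
    (Z' := fun k ω => (X' k ω, N' k ω)) fun n => hsol.identDistrib_finPath hsol' n (hmarg n)
  -- `jointLaw` is the law of `k ↦ (X k, N k)` transported along `(ℕ → S × G) ≃ᵐ (ℕ → S) × (ℕ → G)`.
  exact (hZ.comp (MeasurableEquiv.arrowProdEquivProdArrow S G ℕ).measurable).map_eq

/-- Two solutions of Tsirelson's equation with the same noise law whose
one-dimensional marginals agree are identical in law. -/
theorem tsirelson_eq_in_law_of_marginals_eq
    {Ω : Type w} {Ω' : Type w₂} [MeasurableSpace Ω] [MeasurableSpace Ω']
    (P : Measure Ω) (P' : Measure Ω') [IsProbabilityMeasure P] [IsProbabilityMeasure P']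
    (μ : ℕ → Measure G) (hμ : ∀ k, IsProbabilityMeasure (μ k))
    (X : ℕ → Ω → S) (N : ℕ → Ω → G) (X' : ℕ → Ω' → S) (N' : ℕ → Ω' → G)
    (hsol : IsSolution P μ X N) (hsol' : IsSolution P' μ X' N')
    (hmarg : ∀ k, P.map (X k) = P'.map (X' k)) :
    jointLaw P X N = jointLaw P' X' N' :=
  tsirelson_eq_in_law_of_marginals_eq_general P P' μ X N X' N' hsol hsol' hmarg

end Tsirelson
end

section
/- With Σ^n the set of products of n elements of Σ, Σ^- := ∩_{n≥1} Σ^n, and Σ'S := {σx : σ ∈ Σ', x ∈ S} for a subset Σ' of Σ, it holds that Σ^- S = ∩_{n≥1} (Σ^n S). -/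
open MeasureTheory ProbabilityTheory Filter Topology
open scoped NNReal ENNReal

universe u v w w₂

section Tsirelson

variable {S : Type u} {G : Type v}
  [TopologicalSpace S] [CompactSpace S] [TopologicalSpace.MetrizableSpace S]
  [SecondCountableTopology S] [MeasurableSpace S] [BorelSpace S]
  [TopologicalSpace G] [CompactSpace G] [TopologicalSpace.MetrizableSpace G]
  [SecondCountableTopology G] [MeasurableSpace G] [BorelSpace G]
  [Semigroup G] [ContinuousMul G]
  [SMul G S] [ContinuousSMul G S] [IsScalarTower G G S]

lemma sigPow_succ_subset (n : ℕ) : sigPow G (n + 1) ⊆ sigPow G n := by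
  induction n with
  | zero => exact Set.subset_univ _
  | succ n ih =>
    show Set.image2 _ _ _ ⊆ Set.image2 _ _ _
    exact Set.image2_subset ih subset_rfl

lemma isCompact_sigPow (n : ℕ) : IsCompact (sigPow G n) := by
  induction n with
  | zero => exact isCompact_univ
  | succ n ih =>
    have : sigPow G (n + 1) =
        (fun p : G × G => p.1 * p.2) '' (sigPow G n ×ˢ Set.univ) := by
      rw [Set.image_prod]; rfl
    rw [this]
    exact (ih.prod isCompact_univ).image continuous_mul

/-- With `Σ^n` the set of products of `n` elements of `Σ`,
`Σ^- = ⋂_{n ≥ 1} Σ^n` and `Σ'S = {σx : σ ∈ Σ', x ∈ S}`, one has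
`Σ^- S = ⋂_{n ≥ 1} (Σ^n S)`.  (Here `sigPow G n = Σ^{n+1}`.) -/
theorem sigPow_iInter_smul_eq :
    Set.image2 (· • ·) (⋂ n, sigPow G n) (Set.univ : Set S) =
      ⋂ n, Set.image2 (· • ·) (sigPow G n) (Set.univ : Set S) := by
  apply Set.Subset.antisymm
  · intro s hs
    simp only [Set.mem_iInter] at *
    rintro n
    obtain ⟨σ, hσ, x, -, rfl⟩ := hs
    exact ⟨σ, Set.mem_iInter.1 hσ n, x, Set.mem_univ x, rfl⟩
  · intro s hs
    simp only [Set.mem_iInter] at hs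
    set K : ℕ → Set (G × S) := fun n => {p | p.1 ∈ sigPow G n ∧ p.1 • p.2 = s} with hK
    have hKsub : ∀ n, K (n + 1) ⊆ K n := fun n p hp =>
      ⟨sigPow_succ_subset n hp.1, hp.2⟩
    have hKne : ∀ n, (K n).Nonempty := by
      intro n
      obtain ⟨σ, hσ, x, -, hx⟩ := hs n
      exact ⟨(σ, x), hσ, hx⟩
    have hKcl : ∀ n, IsClosed (K n) := by
      intro n
      have h1 : IsClosed {p : G × S | p.1 ∈ sigPow G n} :=
        ((isCompact_sigPow n).isClosed).preimage continuous_fst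
      have h2 : IsClosed {p : G × S | p.1 • p.2 = s} :=
        isClosed_eq (continuous_fst.smul continuous_snd) continuous_const
      exact h1.inter h2
    have hKc : IsCompact (K 0) := (hKcl 0).isCompact
    obtain ⟨p, hp⟩ := IsCompact.nonempty_iInter_of_sequence_nonempty_isCompact_isClosed
      K hKsub hKne hKc hKcl
    simp only [Set.mem_iInter, hK, Set.mem_setOf_eq] at hp
    exact ⟨p.1, Set.mem_iInter.2 fun n => (hp n).1, p.2, Set.mem_univ _, (hp 0).2⟩

end Tsirelson
end

section
/- Let {X,N} be any solution of Tsirelson's equation with noise law μ. Then for every k ∈ -ℕ, X_k ∈ Σ^- S almost surely, where Σ^- = ∩_{n≥1} Σ^n and Σ^- S = {σx : σ ∈ Σ^-, x ∈ S}. -/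
open MeasureTheory ProbabilityTheory Filter Topology
open scoped NNReal ENNReal

universe u v w w₂

section Tsirelson

variable {S : Type u} {G : Type v}
  [TopologicalSpace S] [CompactSpace S] [TopologicalSpace.MetrizableSpace S]
  [SecondCountableTopology S] [MeasurableSpace S] [BorelSpace S]
  [TopologicalSpace G] [CompactSpace G] [TopologicalSpace.MetrizableSpace G]
  [SecondCountableTopology G] [MeasurableSpace G] [BorelSpace G]
  [Semigroup G] [ContinuousMul G]
  [SMul G S] [ContinuousSMul G S] [IsScalarTower G G S]

lemma sigPow_univ_mul {G : Type v} [Semigroup G] (n : ℕ) :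
    Set.image2 (· * ·) (Set.univ : Set G) (sigPow G n) = sigPow G (n + 1) := by
  induction n with
  | zero => rfl
  | succ n ih =>
    have : sigPow G (n + 1) = Set.image2 (· * ·) (sigPow G n) Set.univ := rfl
    rw [this, ← Set.image2_assoc mul_assoc, ih]
    rfl

lemma sigPow_antitone {G : Type v} [Semigroup G] : ∀ n : ℕ, sigPow G (n + 1) ⊆ sigPow G n := by
  intro n
  induction n with
  | zero => exact fun _ _ => Set.mem_univ _
  | succ n ih =>
    exact Set.image2_subset ih subset_rfl

lemma sigPow_isCompact {G : Type v} [TopologicalSpace G] [CompactSpace G] [Semigroup G]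
    [ContinuousMul G] : ∀ n : ℕ, IsCompact (sigPow G n) := by
  intro n
  induction n with
  | zero => exact isCompact_univ
  | succ n ih =>
    have : sigPow G (n + 1) =
        (fun p : G × G => p.1 * p.2) '' (sigPow G n ×ˢ Set.univ) := by
      rw [Set.image_prod]; rfl
    rw [this]
    exact (ih.prod isCompact_univ).image continuous_mul

/-- For any solution of Tsirelson's equation, `X_k ∈ Σ^- S` a.s.
(Here `sigPow G n = Σ^{n+1}`, so `⋂ n, sigPow G n = Σ^-`.) -/
theorem tsirelson_mem_sigPow_iInter_smul
    {Ω : Type w} [MeasurableSpace Ω] (P : Measure Ω) [IsProbabilityMeasure P]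
    (μ : ℕ → Measure G) (hμ : ∀ k, IsProbabilityMeasure (μ k))
    (X : ℕ → Ω → S) (N : ℕ → Ω → G) (hsol : IsSolution P μ X N) :
    ∀ k, ∀ᵐ ω ∂P, X k ω ∈ Set.image2 (· • ·) (⋂ n, sigPow G n) (Set.univ : Set S) := by
  -- Step 1: for each n and k, a.s. `X k ω ∈ sigPow G n • univ`.
  have step1 : ∀ n k, ∀ᵐ ω ∂P, X k ω ∈ Set.image2 (· • ·) (sigPow G n) (Set.univ : Set S) := by
    intro n
    induction n with
    | zero =>
      intro k
      filter_upwards [hsol.eqn k] with ω h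
      exact ⟨N k ω, Set.mem_univ _, X (k + 1) ω, Set.mem_univ _, h.symm⟩
    | succ n ih =>
      intro k
      filter_upwards [hsol.eqn k, ih (k + 1)] with ω h hmem
      obtain ⟨σ, hσ, y, -, hy⟩ := hmem
      refine ⟨N k ω * σ, ?_, y, Set.mem_univ _, ?_⟩
      · rw [← sigPow_univ_mul]
        exact ⟨N k ω, Set.mem_univ _, σ, hσ, rfl⟩
      · simp only [h, ← hy]
        exact smul_assoc (N k ω) σ y
  intro k
  have hall : ∀ᵐ ω ∂P, ∀ n, X k ω ∈ Set.image2 (· • ·) (sigPow G n) (Set.univ : Set S) :=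
    ae_all_iff.2 fun n => step1 n k
  filter_upwards [hall] with ω hω
  -- Step 2: compactness argument to pass to the intersection.
  set x := X k ω with hx
  set K : ℕ → Set (G × S) := fun n =>
    ((fun p : G × S => p.1 • p.2) ⁻¹' {x}) ∩ (sigPow G n ×ˢ Set.univ) with hK
  have hclosed : ∀ n, IsClosed (K n) := by
    intro n
    exact (isClosed_singleton.preimage (continuous_fst.smul continuous_snd)).inter
      (((sigPow_isCompact n).isClosed).prod isClosed_univ)
  have hcompact : IsCompact (K 0) := (hclosed 0).isCompact
  have hne : ∀ n, (K n).Nonempty := by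
    intro n
    obtain ⟨σ, hσ, y, -, hy⟩ := hω n
    exact ⟨(σ, y), hy, hσ, Set.mem_univ _⟩
  have hmono : ∀ n, K (n + 1) ⊆ K n := by
    intro n
    exact Set.inter_subset_inter subset_rfl
      (Set.prod_mono (sigPow_antitone n) subset_rfl)
  obtain ⟨⟨σ, y⟩, hmem⟩ :=
    IsCompact.nonempty_iInter_of_sequence_nonempty_isCompact_isClosed K hmono hne hcompact hclosed
  refine ⟨σ, ?_, y, Set.mem_univ _, ?_⟩
  · exact Set.mem_iInter.2 fun n => ((Set.mem_iInter.1 hmem n).2).1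
  · exact (Set.mem_iInter.1 hmem 0).1

end Tsirelson
end

section
/- Let (Ω,F,P) be a probability space and let G₁, G₂, G₃ be three sub-σ-fields of F. Suppose that G₁ ⊆ G₂ ∨ G₃ up to P-null sets (i.e., every A ∈ G₁ differs by a P-null set from some set in G₂ ∨ G₃) and that G₁ ∨ G₂ is independent of G₃. Then G₁ ⊆ G₂ up to P-null sets, i.e., every A ∈ G₁ differs by a P-null set from some set in G₂. -/
open MeasureTheory ProbabilityTheory Filter Topology
open scoped NNReal ENNReal

universe u v w w₂

/-!
Let `A ∈ G₁` and `f = 𝔼[1_A | G₂]`. Because `G₁ ∨ G₂` is independent of `G₃`, conditioning on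
`G₃` in addition to `G₂` gives no information about `1_A`: `𝔼[1_A | G₂ ∨ G₃] = f` a.s. (check it
on the π-system of sets `c ∩ d`, `c ∈ G₂`, `d ∈ G₃`). Since `A` is in `G₂ ∨ G₃` up to null sets,
the left side is `1_A`, so `1_A = f` a.s. and `A` agrees up to a null set with `{f = 1} ∈ G₂`.
-/

open MeasurableSpace

namespace MeasureTheory

variable {Ω E : Type*} {m₁ m₂ m0 : MeasurableSpace Ω} {μ : Measure Ω}

lemma isPiSystem_image2_inter :
    IsPiSystem (Set.image2 (· ∩ ·) {s | MeasurableSet[m₁] s} {t | MeasurableSet[m₂] t}) := by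
  rintro _ ⟨c₁, hc₁, d₁, hd₁, rfl⟩ _ ⟨c₂, hc₂, d₂, hd₂, rfl⟩ -
  exact ⟨c₁ ∩ c₂, hc₁.inter hc₂, d₁ ∩ d₂, hd₁.inter hd₂, Set.inter_inter_inter_comm _ _ _ _⟩

lemma generateFrom_image2_inter :
    generateFrom (Set.image2 (· ∩ ·) {s | MeasurableSet[m₁] s} {t | MeasurableSet[m₂] t}) =
      m₁ ⊔ m₂ := by
  refine le_antisymm (generateFrom_le ?_) (sup_le (fun s hs ↦ ?_) (fun t ht ↦ ?_))
  · rintro _ ⟨s, hs, t, ht, rfl⟩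
    exact (le_sup_left (a := m₁) _ hs).inter (le_sup_right (a := m₁) _ ht)
  · exact measurableSet_generateFrom ⟨s, hs, Set.univ, .univ, Set.inter_univ s⟩
  · exact measurableSet_generateFrom ⟨Set.univ, .univ, t, ht, Set.univ_inter t⟩

lemma exists_measurableSet_ae_eq_of_indicator_ae_eq {β : Type*} [Zero β] [One β] [NeZero (1 : β)]
    [MeasurableSpace β] [MeasurableSingletonClass β] {A : Set Ω} {f : Ω → β}
    (hf : Measurable[m₁] f) (h : A.indicator 1 =ᵐ[μ] f) :
    ∃ B, MeasurableSet[m₁] B ∧ A =ᵐ[μ] B := by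
  refine ⟨f ⁻¹' {1}, hf (measurableSet_singleton 1), ?_⟩
  filter_upwards [h] with x hx
  change (x ∈ A) = (f x = 1)
  by_cases hxA : x ∈ A <;> simp [hxA, ← hx]

variable [NormedAddCommGroup E] [NormedSpace ℝ E]

lemma setIntegral_eq_of_isPiSystem {m : MeasurableSpace Ω} {S : Set (Set Ω)} {f g : Ω → E}
    (hm : m ≤ m0) (h_gen : m = generateFrom S) (h_pi : IsPiSystem S)
    (hf : Integrable f μ) (hg : Integrable g μ)
    (h_basic : ∀ t ∈ S, ∫ x in t, f x ∂μ = ∫ x in t, g x ∂μ)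
    (h_univ : ∫ x, f x ∂μ = ∫ x, g x ∂μ) {t : Set Ω} (ht : MeasurableSet[m] t) :
    ∫ x in t, f x ∂μ = ∫ x in t, g x ∂μ := by
  induction t, ht using induction_on_inter h_gen h_pi with
  | empty => simp
  | basic t ht => exact h_basic t ht
  | compl t ht h_eq =>
    have hf_add := integral_add_compl (hm t ht) hf
    have hg_add := integral_add_compl (hm t ht) hg
    rw [← h_eq] at hg_add
    exact add_left_cancel (hf_add.trans (h_univ.trans hg_add.symm))
  | iUnion t h_disj ht h_eq =>
    have ht' i := hm _ (ht i)
    rw [integral_iUnion ht' h_disj hf.integrableOn, integral_iUnion ht' h_disj hg.integrableOn]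
    exact tsum_congr h_eq

variable [CompleteSpace E] [IsFiniteMeasure μ]

lemma setIntegral_eq_measureReal_smul_integral_of_indep {f : Ω → E} {t : Set Ω}
    (hle₁ : m₁ ≤ m0) (hle₂ : m₂ ≤ m0) (hf : StronglyMeasurable[m₁] f) (hfi : Integrable f μ)
    (hindep : Indep m₁ m₂ μ) (ht : MeasurableSet[m₂] t) :
    ∫ x in t, f x ∂μ = μ.real t • ∫ x, f x ∂μ := by
  rw [← setIntegral_condExp hle₂ hfi ht,
    setIntegral_congr_ae (hle₂ t ht) ((condExp_indep_eq hle₁ hle₂ hf hindep).mono fun _ h _ ↦ h),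
    setIntegral_const]

theorem condExp_sup_ae_eq_condExp_of_indep {m : MeasurableSpace Ω} {f : Ω → E}
    (hm : m ≤ m0) (hle₁ : m₁ ≤ m0) (hle₂ : m₂ ≤ m0) (hf : StronglyMeasurable[m] f)
    (hindep : Indep (m ⊔ m₁) m₂ μ) :
    μ[f | m₁ ⊔ m₂] =ᵐ[μ] μ[f | m₁] := by
  by_cases hfi : Integrable f μ
  swap
  · simp only [condExp_of_not_integrable hfi]
    rfl
  have hle : m ≤ m ⊔ m₁ := le_sup_left
  have hle₁' : m₁ ≤ m ⊔ m₁ := le_sup_right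
  have h_rect (g : Ω → E) (hg : StronglyMeasurable[m ⊔ m₁] g) (hgi : Integrable g μ)
      {c d : Set Ω} (hc : MeasurableSet[m₁] c) (hd : MeasurableSet[m₂] d) :
      ∫ x in c ∩ d, g x ∂μ = μ.real d • ∫ x in c, g x ∂μ := by
    rw [Set.inter_comm, ← setIntegral_indicator (hle₁ c hc), ← integral_indicator (hle₁ c hc)]
    exact setIntegral_eq_measureReal_smul_integral_of_indep (sup_le hm hle₁) hle₂
      (hg.indicator (hle₁' c hc)) (hgi.indicator (hle₁ c hc)) hindep hd
  refine (ae_eq_condExp_of_forall_setIntegral_eq (sup_le hle₁ hle₂) hfi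
    (fun _ _ _ ↦ integrable_condExp.integrableOn) (fun s hs _ ↦ ?_)
    (stronglyMeasurable_condExp.mono (le_sup_left : m₁ ≤ m₁ ⊔ m₂)).aestronglyMeasurable).symm
  refine setIntegral_eq_of_isPiSystem (sup_le hle₁ hle₂) generateFrom_image2_inter.symm
    isPiSystem_image2_inter integrable_condExp hfi ?_ (integral_condExp hle₁) hs
  rintro _ ⟨c, hc, d, hd, rfl⟩
  rw [h_rect _ (stronglyMeasurable_condExp.mono hle₁') integrable_condExp hc hd,
    h_rect f (hf.mono hle) hfi hc hd, setIntegral_condExp hle₁ hfi hc]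

end MeasureTheory

/-- If `G₁ ⊆ G₂ ∨ G₃` up to `P`-null sets and `G₁ ∨ G₂` is independent of
`G₃`, then `G₁ ⊆ G₂` up to `P`-null sets. -/
theorem subset_modNull_of_indep
    {Ω : Type w} [m0 : MeasurableSpace Ω] (P : Measure Ω) [IsProbabilityMeasure P]
    (G₁ G₂ G₃ : MeasurableSpace Ω) (h₁ : G₁ ≤ m0) (h₂ : G₂ ≤ m0) (h₃ : G₃ ≤ m0)
    (hsub : ∀ A : Set Ω, MeasurableSet[G₁] A →
      ∃ B : Set Ω, MeasurableSet[G₂ ⊔ G₃] B ∧ P (symmDiff A B) = 0)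
    (hindep : Indep (G₁ ⊔ G₂) G₃ P) :
    ∀ A : Set Ω, MeasurableSet[G₁] A →
      ∃ B : Set Ω, MeasurableSet[G₂] B ∧ P (symmDiff A B) = 0 := by
  -- `G₁`, `G₂`, `G₃` are local instances too; make `m0` the one that instance search finds.
  let _ : MeasurableSpace Ω := m0
  intro A hA
  obtain ⟨B, hB, hAB⟩ := hsub A hA
  rw [measure_symmDiff_eq_zero_iff] at hAB
  set f : Ω → ℝ := A.indicator 1
  have hf_int : Integrable f P := (integrable_const 1).indicator (h₁ A hA)
  have hfB : f =ᵐ[P] B.indicator 1 := indicator_ae_eq_of_ae_eq_set hAB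
  have hf_sup : AEStronglyMeasurable[G₂ ⊔ G₃] f P :=
    ⟨B.indicator 1, stronglyMeasurable_const.indicator hB, hfB⟩
  have h_cond : P[f | G₂] =ᵐ[P] f :=
    (condExp_sup_ae_eq_condExp_of_indep h₁ h₂ h₃ (stronglyMeasurable_const.indicator hA)
      hindep).symm.trans (condExp_of_aestronglyMeasurable' (sup_le h₂ h₃) hf_sup hf_int)
  obtain ⟨C, hC, hAC⟩ :=
    exists_measurableSet_ae_eq_of_indicator_ae_eq stronglyMeasurable_condExp.measurable h_cond.symm
  exact ⟨C, hC, measure_symmDiff_eq_zero_iff.mpr hAC⟩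
end

section
/- Suppose that uniqueness in law holds for Tsirelson's equation with noise law μ and that there exists a strong solution. Then pathwise uniqueness holds: for any two solutions {X,N} and {X',N} defined on a common probability space and sharing the same noise process N, one has X_k = X'_k a.s. for all k ∈ -ℕ. -/
open MeasureTheory ProbabilityTheory Filter Topology
open scoped NNReal ENNReal

universe u v w w₂

section YWAux

open MeasureTheory

/-- Factorization of a `comap`-measurable `ℝ≥0∞`-valued function through `f`. -/
lemma factor_comap_ennreal {Ω β : Type*} [MeasurableSpace Ω] {mβ : MeasurableSpace β}
    (f : Ω → β) (u : Ω → ℝ≥0∞) (hu : Measurable[mβ.comap f] u) :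
    ∃ r : β → ℝ≥0∞, Measurable r ∧ ∀ ω, r (f ω) = u ω := by
  classical
  have hsets : ∀ q : ℚ, ∃ B : Set β, MeasurableSet B ∧
      f ⁻¹' B = {ω | u ω < ENNReal.ofReal q} := fun q =>
    (hu (measurableSet_Iio (a := ENNReal.ofReal q)) :
      MeasurableSet[mβ.comap f] {ω | u ω < ENNReal.ofReal q})
  choose B hB hBf using hsets
  refine ⟨fun b => ⨅ q : ℚ, if b ∈ B q then ENNReal.ofReal q else ⊤,
    Measurable.iInf fun q => Measurable.ite (hB q) measurable_const measurable_const,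
    fun ω => ?_⟩
  have hmem : ∀ q : ℚ, f ω ∈ B q ↔ u ω < ENNReal.ofReal q := fun q => by
    have := Set.ext_iff.mp (hBf q) ω; exact this
  simp only [hmem]
  refine le_antisymm ?_ (le_iInf fun q => ?_)
  · by_cases ha : u ω = ⊤
    · rw [ha]; exact le_top
    · refine ENNReal.le_of_forall_pos_le_add fun ε hε _ => ?_
      obtain ⟨q, hq1, hq2⟩ := exists_rat_btwn
        (show (u ω).toReal < (u ω).toReal + (ε : ℝ) by
          have : (0:ℝ) < ε := hε; linarith)
      have hq0 : (0:ℝ) < (q : ℝ) := lt_of_le_of_lt ENNReal.toReal_nonneg hq1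
      have hlt : u ω < ENNReal.ofReal q := by
        rw [← ENNReal.ofReal_toReal ha]
        exact (ENNReal.ofReal_lt_ofReal_iff hq0).mpr hq1
      refine le_trans (iInf_le _ q) ?_
      rw [if_pos hlt]
      calc ENNReal.ofReal q ≤ ENNReal.ofReal ((u ω).toReal + (ε : ℝ)) :=
            ENNReal.ofReal_le_ofReal hq2.le
        _ = ENNReal.ofReal (u ω).toReal + ENNReal.ofReal (ε : ℝ) :=
            ENNReal.ofReal_add ENNReal.toReal_nonneg ε.coe_nonneg
        _ = u ω + ε := by rw [ENNReal.ofReal_toReal ha, ENNReal.ofReal_coe_nnreal]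
  · split_ifs with h
    · exact h.le
    · exact le_top

/-- Doob–Dynkin: factorization of a `comap`-measurable map into a standard Borel space. -/
lemma factor_comap_standardBorel {Ω β S' : Type*} [MeasurableSpace Ω] {mβ : MeasurableSpace β}
    [TopologicalSpace S'] [MeasurableSpace S'] [StandardBorelSpace S'] [Nonempty S']
    (f : Ω → β) (Y : Ω → S') (hY : Measurable[mβ.comap f] Y) :
    ∃ φ : β → S', Measurable φ ∧ ∀ ω, φ (f ω) = Y ω := by
  obtain ⟨e, he⟩ := MeasureTheory.exists_measurableEmbedding_real S'
  set je : S' → ℝ≥0∞ := fun s => ENNReal.ofReal (Real.exp (e s)) with hje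
  have hjemeas : Measurable je :=
    ENNReal.measurable_ofReal.comp (Real.measurable_exp.comp he.measurable)
  have hjeinj : Function.Injective je := by
    intro a b hab
    have h1 : Real.exp (e a) = Real.exp (e b) :=
      (ENNReal.ofReal_eq_ofReal_iff (Real.exp_pos _).le (Real.exp_pos _).le).mp hab
    exact he.injective (Real.exp_injective h1)
  have hemb : MeasurableEmbedding je := hjemeas.measurableEmbedding hjeinj
  obtain ⟨ψ, hψ, hψe⟩ := hemb.exists_measurable_extend measurable_id fun _ => ‹Nonempty S'›
  obtain ⟨r, hr, hru⟩ := factor_comap_ennreal f (fun ω => je (Y ω)) (hjemeas.comp hY)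
  refine ⟨ψ ∘ r, hψ.comp hr, fun ω => ?_⟩
  have h2 : ψ (je (Y ω)) = Y ω := congrFun hψe (Y ω)
  simp only [Function.comp_apply, hru ω, h2]

end YWAux

section Tsirelson

variable {S : Type u} {G : Type v}
  [TopologicalSpace S] [CompactSpace S] [TopologicalSpace.MetrizableSpace S]
  [SecondCountableTopology S] [MeasurableSpace S] [BorelSpace S]
  [TopologicalSpace G] [CompactSpace G] [TopologicalSpace.MetrizableSpace G]
  [SecondCountableTopology G] [MeasurableSpace G] [BorelSpace G]
  [Semigroup G] [ContinuousMul G]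
  [SMul G S] [ContinuousSMul G S] [IsScalarTower G G S]

/-- **Yamada–Watanabe, part (i).** Uniqueness in law together with the existence
of a strong solution implies pathwise uniqueness. -/
theorem tsirelson_pathwise_uniqueness_of_uniqueness_in_law_of_strong
    (μ : ℕ → Measure G) (hμ : ∀ k, IsProbabilityMeasure (μ k))
    (huniq : ∀ (Ω₁ : Type (max u v)) (_ : MeasurableSpace Ω₁) (P₁ : Measure Ω₁)
      (X₁ : ℕ → Ω₁ → S) (N₁ : ℕ → Ω₁ → G)
      (Ω₂ : Type (max u v)) (_ : MeasurableSpace Ω₂) (P₂ : Measure Ω₂)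
      (X₂ : ℕ → Ω₂ → S) (N₂ : ℕ → Ω₂ → G),
      IsProbabilityMeasure P₁ → IsProbabilityMeasure P₂ →
      IsSolution P₁ μ X₁ N₁ → IsSolution P₂ μ X₂ N₂ →
      jointLaw P₁ X₁ N₁ = jointLaw P₂ X₂ N₂)
    (hstrong : ∃ (Ω' : Type (max u v)) (_ : MeasurableSpace Ω') (P' : Measure Ω')
      (X' : ℕ → Ω' → S) (N' : ℕ → Ω' → G),
      IsProbabilityMeasure P' ∧ IsSolution P' μ X' N' ∧ IsStrong P' X' N')
    {Ω : Type (max u v)} [MeasurableSpace Ω] (P : Measure Ω) [IsProbabilityMeasure P]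
    (X X' : ℕ → Ω → S) (N : ℕ → Ω → G)
    (hsol : IsSolution P μ X N) (hsol' : IsSolution P μ X' N) :
    ∀ k, X k =ᵐ[P] X' k := by
  obtain ⟨Ω'', mΩ'', P'', Xs, Ns, hP'', hsolS, hstr⟩ := hstrong
  -- nonemptiness of S
  have hne : Nonempty Ω := by
    by_contra h
    rw [not_nonempty_iff] at h
    have h1 := measure_univ (μ := P)
    rw [Set.univ_eq_empty_iff.mpr h, measure_empty] at h1
    exact zero_ne_one h1
  haveI : Nonempty S := ⟨X 0 hne.some⟩
  -- S is standard Borel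
  haveI : PolishSpace S := by
    letI := TopologicalSpace.metrizableSpaceMetric S
    infer_instance
  intro k
  -- strong solution: factor `Xs k` through the noise path
  obtain ⟨Y, hYmeas, hYae⟩ := hstr k
  set path : Ω'' → (ℕ → G) := fun ω j => Ns j ω with hpath
  have hpathmeas : Measurable path := measurable_pi_lambda _ fun j => hsolS.measurable_N j
  have hle : past Ns k ≤ MeasurableSpace.comap path inferInstance := by
    refine iSup₂_le fun j _ => ?_
    have hNs : Ns j = (fun p : ℕ → G => p j) ∘ path := rfl
    rw [hNs, ← MeasurableSpace.comap_comp]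
    exact MeasurableSpace.comap_mono (measurable_pi_apply j).comap_le
  obtain ⟨φ, hφ, hφeq⟩ := factor_comap_standardBorel path Y (hYmeas.mono hle le_rfl)
  -- the graph event on path space
  set A : Set ((ℕ → S) × (ℕ → G)) := {p | p.1 k = φ p.2} with hA
  have hmeas1 : Measurable fun p : (ℕ → S) × (ℕ → G) => p.1 k :=
    (measurable_pi_apply k).comp measurable_fst
  have hmeas2 : Measurable fun p : (ℕ → S) × (ℕ → G) => φ p.2 := hφ.comp measurable_snd
  have hAmeas : MeasurableSet A :=
    StronglyMeasurable.measurableSet_eq_fun hmeas1.stronglyMeasurable hmeas2.stronglyMeasurable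
  -- the strong solution's joint law gives full measure to A
  have hJs : Measurable fun ω => (fun j => Xs j ω, fun j => Ns j ω) :=
    (measurable_pi_lambda _ fun j => hsolS.measurable_X j).prodMk hpathmeas
  have hQA : jointLaw P'' Xs Ns A = 1 := by
    rw [jointLaw, Measure.map_apply hJs hAmeas]
    have hpre : (fun ω => ((fun j => Xs j ω, fun j => Ns j ω) : (ℕ → S) × (ℕ → G))) ⁻¹' A
        = {ω | Xs k ω = φ (path ω)} := rfl
    rw [hpre]
    have hae : ∀ᵐ ω ∂P'', Xs k ω = φ (path ω) := by
      filter_upwards [hYae] with ω hω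
      rw [hω, hφeq ω]
    have hmeasset : MeasurableSet {ω | Xs k ω = φ (path ω)} :=
      StronglyMeasurable.measurableSet_eq_fun (hsolS.measurable_X k).stronglyMeasurable
        ((hφ.comp hpathmeas).stronglyMeasurable)
    rw [← prob_compl_eq_zero_iff hmeasset]
    have : {ω | Xs k ω = φ (path ω)}ᶜ = {ω | ¬ Xs k ω = φ (path ω)} := rfl
    rw [this, ← ae_iff]
    exact hae
  -- transfer to our two solutions via uniqueness in law
  have h1 : jointLaw P X N = jointLaw P'' Xs Ns :=
    huniq Ω _ P X N Ω'' _ P'' Xs Ns inferInstance hP'' hsol hsolS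
  have h2 : jointLaw P X' N = jointLaw P'' Xs Ns :=
    huniq Ω _ P X' N Ω'' _ P'' Xs Ns inferInstance hP'' hsol' hsolS
  have hpathN : Measurable fun ω : Ω => (fun j => N j ω : ℕ → G) :=
    measurable_pi_lambda _ fun j => hsol.measurable_N j
  have key : ∀ (Z : ℕ → Ω → S), IsSolution P μ Z N → jointLaw P Z N = jointLaw P'' Xs Ns →
      ∀ᵐ ω ∂P, Z k ω = φ (fun j => N j ω) := by
    intro Z hZ hlaw
    have hJZ : Measurable fun ω => ((fun j => Z j ω, fun j => N j ω) : (ℕ → S) × (ℕ → G)) :=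
      (measurable_pi_lambda _ fun j => hZ.measurable_X j).prodMk hpathN
    have hPA : P ((fun ω => ((fun j => Z j ω, fun j => N j ω) : (ℕ → S) × (ℕ → G))) ⁻¹' A)
        = 1 := by
      rw [← Measure.map_apply hJZ hAmeas, ← jointLaw, hlaw, hQA]
    have hmeasset : MeasurableSet {ω | Z k ω = φ (fun j => N j ω)} :=
      StronglyMeasurable.measurableSet_eq_fun (hZ.measurable_X k).stronglyMeasurable
        ((hφ.comp hpathN).stronglyMeasurable)
    have hpre : (fun ω => ((fun j => Z j ω, fun j => N j ω) : (ℕ → S) × (ℕ → G))) ⁻¹' A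
        = {ω | Z k ω = φ (fun j => N j ω)} := rfl
    rw [hpre] at hPA
    rw [ae_iff]
    have : {ω | ¬ Z k ω = φ (fun j => N j ω)} = {ω | Z k ω = φ (fun j => N j ω)}ᶜ := rfl
    rw [this, prob_compl_eq_zero_iff hmeasset]
    exact hPA
  filter_upwards [key X hsol h1, key X' hsol' h2] with ω hX hX'
  rw [hX, hX']

end Tsirelson
end

section
/- Let (σ_l) be a sequence in Σ and (x_l) a sequence in S. Suppose σ_l → σ for some σ ∈ Σ having cancellative action on S, and that the sequence (σ_l x_l) converges in S. Then (x_l) converges in S. -/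
open MeasureTheory ProbabilityTheory Filter Topology
open scoped NNReal ENNReal

universe u v w w₂

/-! Every cluster point `x` of `xs` is a limit of `xs` along an ultrafilter finer than `l`; along
it `σs • xs` tends both to `σ • x` and to `z`, so `σ • x = z`. Injectivity of `σ` therefore leaves
a single cluster point, and in a compact space a map with a unique cluster point converges to it. -/

section ClusterPt

variable {ι S G : Type*} [TopologicalSpace S] [TopologicalSpace G] [SMul G S] [ContinuousSMul G S]
  {l : Filter ι} {σs : ι → G} {xs : ι → S} {σ : G} {z : S}

theorem MapClusterPt.smul_eq_of_tendsto [T2Space S] {x : S} (hx : MapClusterPt x l xs)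
    (hσs : Tendsto σs l (𝓝 σ)) (hz : Tendsto (fun i => σs i • xs i) l (𝓝 z)) : σ • x = z := by
  obtain ⟨U, hUl, hxU⟩ := mapClusterPt_iff_ultrafilter.mp hx
  exact tendsto_nhds_unique ((hσs.mono_left hUl).smul hxU) (hz.mono_left hUl)

theorem exists_tendsto_of_tendsto_smul_of_injective [CompactSpace S] [T2Space S] [NeBot l]
    (hσ : Function.Injective (σ • · : S → S)) (hσs : Tendsto σs l (𝓝 σ))
    (hz : Tendsto (fun i => σs i • xs i) l (𝓝 z)) : ∃ x : S, Tendsto xs l (𝓝 x) := by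
  obtain ⟨x, hx⟩ : ∃ x, MapClusterPt x l xs := exists_clusterPt_of_compactSpace _
  exact ⟨x, tendsto_nhds_of_unique_mapClusterPt fun y hy =>
    hσ <| (hy.smul_eq_of_tendsto hσs hz).trans (hx.smul_eq_of_tendsto hσs hz).symm⟩

end ClusterPt

section Tsirelson

variable {S : Type u} {G : Type v}
  [TopologicalSpace S] [CompactSpace S] [TopologicalSpace.MetrizableSpace S]
  [SecondCountableTopology S] [MeasurableSpace S] [BorelSpace S]
  [TopologicalSpace G] [CompactSpace G] [TopologicalSpace.MetrizableSpace G]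
  [SecondCountableTopology G] [MeasurableSpace G] [BorelSpace G]
  [Semigroup G] [ContinuousMul G]
  [SMul G S] [ContinuousSMul G S] [IsScalarTower G G S]

/-- If `σ_l → σ` with `σ` having cancellative action on `S` and
`σ_l x_l` converges in `S`, then `x_l` converges in `S`. -/
theorem tendsto_of_smul_tendsto_of_cancellative
    (σ : G) (hσ : ∀ x y : S, σ • x = σ • y → x = y)
    (σs : ℕ → G) (xs : ℕ → S)
    (hσs : Tendsto σs atTop (𝓝 σ))
    (hconv : ∃ z : S, Tendsto (fun l => σs l • xs l) atTop (𝓝 z)) :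
    ∃ x : S, Tendsto xs atTop (𝓝 x) := by
  obtain ⟨z, hz⟩ := hconv
  exact exists_tendsto_of_tendsto_smul_of_injective hσ hσs hz

end Tsirelson
end

section
/- Suppose condition (P1') holds: for every k ∈ -ℕ, N_{k,l} converges a.s. as l → -∞ to a random variable Y_k. Suppose moreover that Y_k ∈ Σ^s a.s. for every k ∈ -ℕ, where Σ^s is the set of elements of Σ having synchronizing action on S, and let ψ: Σ^s → S be the map with σS = {ψ(σ)} for σ ∈ Σ^s. Then pathwise uniqueness holds for Tsirelson's equation with noise law μ, and the unique (strong) solution satisfies X_k = ψ(Y_k) a.s. for every k ∈ -ℕ. -/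
open MeasureTheory ProbabilityTheory Filter Topology
open scoped NNReal ENNReal

universe u v w w₂

section Aux

open MeasureTheory Filter Topology

/-- Wrapper for `measurableSet_exists_tendsto` with an explicit σ-algebra. -/
private lemma aux_measurableSet_exists_tendsto {Ω S : Type*} [TopologicalSpace S]
    [PolishSpace S] [MeasurableSpace S] [OpensMeasurableSpace S]
    {m : MeasurableSpace Ω} {f : ℕ → Ω → S} (hf : ∀ i, Measurable[m] (f i)) :
    MeasurableSet[m] {ω | ∃ c, Tendsto (fun n => f n ω) atTop (𝓝 c)} :=
  measurableSet_exists_tendsto hf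

/-- Wrapper for `measurable_limit_of_tendsto_metrizable_ae` with an explicit σ-algebra. -/
private lemma aux_measurable_limit {Ω S : Type*} [TopologicalSpace S]
    [TopologicalSpace.PseudoMetrizableSpace S] [MeasurableSpace S] [BorelSpace S]
    {m : MeasurableSpace Ω} (μ : @Measure Ω m) {f : ℕ → Ω → S}
    (hf : ∀ n, Measurable[m] (f n))
    (h : ∀ᵐ ω ∂μ, ∃ l, Tendsto (fun n => f n ω) atTop (𝓝 l)) :
    ∃ g : Ω → S, Measurable[m] g ∧ ∀ᵐ ω ∂μ, Tendsto (fun n => f n ω) atTop (𝓝 (g ω)) :=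
  measurable_limit_of_tendsto_metrizable_ae (fun n => (hf n).aemeasurable) h

end Aux

section KeyLemmas

variable {S : Type u} {G : Type v}
  [TopologicalSpace S] [CompactSpace S] [TopologicalSpace.MetrizableSpace S]
  [SecondCountableTopology S] [MeasurableSpace S] [BorelSpace S]
  [TopologicalSpace G] [CompactSpace G] [TopologicalSpace.MetrizableSpace G]
  [SecondCountableTopology G] [MeasurableSpace G] [BorelSpace G]
  [Semigroup G] [ContinuousMul G]
  [SMul G S] [ContinuousSMul G S] [IsScalarTower G G S]

/-- Iterating the equation: `X_k = N_{k,l} X_l`. -/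
lemma isSolution_eq_prodN_smul {Ω : Type w} [MeasurableSpace Ω] {P : Measure Ω}
    {μ : ℕ → Measure G} {X : ℕ → Ω → S} {N : ℕ → Ω → G}
    (hX : IsSolution P μ X N) (k : ℕ) :
    ∀ j, X k =ᵐ[P] fun ω => prodN N k j ω • X (k + j + 1) ω := by
  intro j
  induction j with
  | zero => simpa [prodN] using hX.eqn k
  | succ j ih =>
    filter_upwards [ih, hX.eqn (k + j + 1)] with ω h1 h2
    rw [h1, h2, ← smul_assoc, smul_eq_mul]
    rfl

/-- Any solution satisfies `X_k = ψ(Y_k)` a.s. -/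
lemma isSolution_eq_psi {Ω : Type w} [MeasurableSpace Ω] {P : Measure Ω}
    [IsProbabilityMeasure P]
    {μ : ℕ → Measure G} {X : ℕ → Ω → S} {N : ℕ → Ω → G} {Y : ℕ → Ω → G}
    (hX : IsSolution P μ X N)
    (hP1 : ∀ n : ℕ, ∀ᵐ ω ∂P, Tendsto (fun j => prodN N n j ω) atTop (𝓝 (Y n ω)))
    (hYs : ∀ n : ℕ, ∀ᵐ ω ∂P, Y n ω ∈ {σ : G | ∀ x y : S, σ • x = σ • y})
    (ψ : G → S) (hψ : ∀ σ : G, (∀ x y : S, σ • x = σ • y) → ∀ x : S, σ • x = ψ σ)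
    (k : ℕ) : X k =ᵐ[P] fun ω => ψ (Y k ω) := by
  have hseq : ∀ᵐ ω ∂P, ∀ j, X k ω = prodN N k j ω • X (k + j + 1) ω :=
    (ae_all_iff).2 (isSolution_eq_prodN_smul hX k)
  filter_upwards [hP1 k, hYs k, hseq] with ω hconv hsync heq
  -- pick a convergent subsequence of `X (k+j+1) ω`
  obtain ⟨x, φ, hφ, hx⟩ := CompactSpace.tendsto_subseq (fun j => X (k + j + 1) ω)
  have h1 : Tendsto (fun j => prodN N k (φ j) ω • X (k + φ j + 1) ω) atTop
      (𝓝 (Y k ω • x)) :=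
    ((hconv.comp hφ.tendsto_atTop).smul hx)
  have h2 : Tendsto (fun j => prodN N k (φ j) ω • X (k + φ j + 1) ω) atTop
      (𝓝 (X k ω)) :=
    (tendsto_const_nhds : Tendsto (fun _ : ℕ => X k ω) atTop _).congr
      (fun j => heq (φ j))
  have := tendsto_nhds_unique h2 h1
  rw [this, hψ (Y k ω) hsync x]

end KeyLemmas

section Tsirelson

variable {S : Type u} {G : Type v}
  [TopologicalSpace S] [CompactSpace S] [TopologicalSpace.MetrizableSpace S]
  [SecondCountableTopology S] [MeasurableSpace S] [BorelSpace S]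
  [TopologicalSpace G] [CompactSpace G] [TopologicalSpace.MetrizableSpace G]
  [SecondCountableTopology G] [MeasurableSpace G] [BorelSpace G]
  [Semigroup G] [ContinuousMul G]
  [SMul G S] [ContinuousSMul G S] [IsScalarTower G G S]

/-- Under (P1') with a.s. limits `Y_k` having synchronizing action on `S`
(`σS` is a singleton `{ψ(σ)}`), pathwise uniqueness holds and any solution (necessarily
strong) satisfies `X_k = ψ(Y_k)` a.s. -/
theorem tsirelson_P1'_synchronizing_pathwise_uniqueness
    {Ω : Type w} [MeasurableSpace Ω] (P : Measure Ω) [IsProbabilityMeasure P]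
    (μ : ℕ → Measure G) (hμ : ∀ k, IsProbabilityMeasure (μ k))
    (N : ℕ → Ω → G) (Y : ℕ → Ω → G)
    (hP1 : ∀ n : ℕ, ∀ᵐ ω ∂P, Tendsto (fun j => prodN N n j ω) atTop (𝓝 (Y n ω)))
    (hYs : ∀ n : ℕ, ∀ᵐ ω ∂P, Y n ω ∈ {σ : G | ∀ x y : S, σ • x = σ • y})
    (ψ : G → S) (hψ : ∀ σ : G, (∀ x y : S, σ • x = σ • y) → ∀ x : S, σ • x = ψ σ) :
    (∀ X X' : ℕ → Ω → S, IsSolution P μ X N → IsSolution P μ X' N →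
      ∀ k, X k =ᵐ[P] X' k) ∧
    (∀ X : ℕ → Ω → S, IsSolution P μ X N →
      (∀ k, X k =ᵐ[P] fun ω => ψ (Y k ω)) ∧ IsStrong P X N) := by
  have huniq : ∀ X : ℕ → Ω → S, IsSolution P μ X N →
      ∀ k, X k =ᵐ[P] fun ω => ψ (Y k ω) :=
    fun X hX k => isSolution_eq_psi hX hP1 hYs ψ hψ k
  refine ⟨fun X X' hX hX' k => (huniq X hX k).trans (huniq X' hX' k).symm,
    fun X hX => ⟨huniq X hX, ?_⟩⟩
  haveI : PolishSpace S := by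
    letI := TopologicalSpace.metrizableSpaceMetric S; infer_instance
  have hΩ : Nonempty Ω := by
    by_contra h
    rw [not_nonempty_iff] at h
    have h1 : P Set.univ = 1 := measure_univ
    rw [Set.univ_eq_empty_iff.2 h, measure_empty] at h1
    exact one_ne_zero h1.symm
  intro k
  set x₀ : S := X k (Classical.choice hΩ) with hx₀
  have hle : past N k ≤ ‹MeasurableSpace Ω› := by
    unfold past
    exact iSup₂_le fun j _ => measurable_iff_comap_le.mp (hX.measurable_N j)
  have hN : ∀ j, k ≤ j → Measurable[past N k] (N j) := by
    intro j hj
    refine measurable_iff_comap_le.mpr ?_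
    unfold past
    exact le_iSup₂ (f := fun j (_ : j ≥ k) => MeasurableSpace.comap (N j) inferInstance) j hj
  have hprod : ∀ j, Measurable[past N k] (prodN N k j) := by
    intro j
    induction j with
    | zero => exact hN k le_rfl
    | succ j ih => exact ih.mul (hN (k + j + 1) (by omega))
  set f : ℕ → Ω → S := fun j ω => prodN N k j ω • x₀ with hfdef
  have hf : ∀ j, Measurable[past N k] (f j) := fun j =>
    ((continuous_id.smul (continuous_const : Continuous fun _ : G => x₀)).measurable).comp
      (hprod j)
  have hC : MeasurableSet[past N k] {ω | ∃ c, Tendsto (fun j => f j ω) atTop (𝓝 c)} :=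
    aux_measurableSet_exists_tendsto hf
  have hCae : ∀ᵐ ω ∂P, ∃ c, Tendsto (fun j => f j ω) atTop (𝓝 c) := by
    filter_upwards [hP1 k] with ω h
    exact ⟨Y k ω • x₀, h.smul tendsto_const_nhds⟩
  have htrim : ∀ᵐ ω ∂(P.trim hle), ∃ c, Tendsto (fun j => f j ω) atTop (𝓝 c) := by
    rw [ae_iff]
    rw [ae_iff] at hCae
    have : {ω | ¬∃ c, Tendsto (fun j => f j ω) atTop (𝓝 c)}
        = {ω | ∃ c, Tendsto (fun j => f j ω) atTop (𝓝 c)}ᶜ := rfl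
    rw [this, trim_measurableSet_eq hle hC.compl]
    exact hCae
  obtain ⟨g, hg, hgt⟩ := aux_measurable_limit (P.trim hle) hf htrim
  refine ⟨g, hg, ?_⟩
  have hgt' : ∀ᵐ ω ∂P, Tendsto (fun j => f j ω) atTop (𝓝 (g ω)) := ae_of_ae_trim hle hgt
  filter_upwards [hgt', hP1 k, hYs k, huniq X hX k] with ω h1 h2 h3 h4
  have h5 : Tendsto (fun j => f j ω) atTop (𝓝 (Y k ω • x₀)) := h2.smul tendsto_const_nhds
  have h6 : g ω = Y k ω • x₀ := tendsto_nhds_unique h1 h5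
  rw [h4, h6, hψ (Y k ω) h3 x₀]


end Tsirelson
end

section
/- Suppose condition (P2') holds: there exists a compact non-trivial subgroup H of Σ such that, for every k ∈ -ℕ, the law of N_{k,l} converges weakly as l → -∞ to a probability measure ν_k on Σ whose law is right H-invariant (invariant under σ ↦ σh for every h ∈ H), and the image of N_{k,l} in the coset space Σ/H (the quotient of Σ by the right action of H, with the quotient topology) converges a.s. as l → -∞. Let {X,N} be an extremal solution such that, for each k ∈ -ℕ, the law of X_k equals ν_k * δ_x for some x ∈ S. If the orbit Hx := {hx : h ∈ H} is a singleton, then the solution {X,N} is strong. -/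
open MeasureTheory ProbabilityTheory Filter Topology
open scoped NNReal ENNReal

universe u v w w₂

set_option linter.unusedSectionVars false

section AuxIndep

variable {Ω : Type*} {mΩ : MeasurableSpace Ω} {P : Measure Ω} [IsProbabilityMeasure P]

theorem aux_indep_mono_left {A A' C : MeasurableSpace Ω} (h : Indep A C P) (hle : A' ≤ A) :
    Indep A' C P := by
  rw [ProbabilityTheory.Indep_iff] at h ⊢
  exact fun t1 t2 h1 h2 => h t1 t2 (hle _ h1) h2

theorem aux_indep_mono_right {A C C' : MeasurableSpace Ω} (h : Indep A C P) (hle : C' ≤ C) :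
    Indep A C' P := by
  rw [ProbabilityTheory.Indep_iff] at h ⊢
  exact fun t1 t2 h1 h2 => h t1 t2 h1 (hle _ h2)

theorem aux_indep_sup {A B C C' : MeasurableSpace Ω}
    (hA' : A ≤ mΩ) (hB' : B ≤ mΩ) (hC' : C ≤ mΩ)
    (hA : Indep A C' P) (hB : Indep B C P) (hBle : B ≤ C') (hCle : C ≤ C') :
    Indep (A ⊔ B) C P := by
  have hgen : A ⊔ B = MeasurableSpace.generateFrom
      {s : Set Ω | ∃ a b, MeasurableSet[A] a ∧ MeasurableSet[B] b ∧ s = a ∩ b} := by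
    refine le_antisymm (sup_le ?_ ?_) (MeasurableSpace.generateFrom_le ?_)
    · intro s hs
      exact MeasurableSpace.measurableSet_generateFrom
        ⟨s, Set.univ, hs, MeasurableSet.univ, (Set.inter_univ s).symm⟩
    · intro s hs
      exact MeasurableSpace.measurableSet_generateFrom
        ⟨Set.univ, s, MeasurableSet.univ, hs, (Set.univ_inter s).symm⟩
    · rintro s ⟨a, b, ha, hb, rfl⟩
      exact ((le_sup_left : A ≤ A ⊔ B) _ ha).inter ((le_sup_right : B ≤ A ⊔ B) _ hb)
  refine ProbabilityTheory.IndepSets.indep (sup_le hA' hB') hC' ?_ ?_ hgen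
    (@MeasurableSpace.generateFrom_measurableSet Ω C).symm ?_
  · rintro s ⟨a, b, ha, hb, rfl⟩ t ⟨a', b', ha', hb', rfl⟩ -
    exact ⟨a ∩ a', b ∩ b', ha.inter ha', hb.inter hb', by
      rw [Set.inter_assoc, Set.inter_comm b, Set.inter_assoc, Set.inter_comm b', Set.inter_assoc]⟩
  · exact @MeasurableSpace.isPiSystem_measurableSet Ω C
  · rw [ProbabilityTheory.IndepSets_iff]
    rintro t1 t2 ⟨a, b, ha, hb, rfl⟩ hc
    have hAi := (ProbabilityTheory.Indep_iff _ _ _).1 hA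
    have hBi := (ProbabilityTheory.Indep_iff _ _ _).1 hB
    have hbc : MeasurableSet[C'] (b ∩ t2) := (hBle _ hb).inter (hCle _ hc)
    have h1 : P (a ∩ b ∩ t2) = P a * P (b ∩ t2) := by
      rw [Set.inter_assoc]; exact hAi a (b ∩ t2) ha hbc
    have h2 : P (b ∩ t2) = P b * P t2 := hBi b t2 hb hc
    have h3 : P (a ∩ b) = P a * P b := hAi a b ha (hBle _ hb)
    rw [h1, h2, h3, mul_assoc]

end AuxIndep

section AuxPast

variable {Ω α : Type*} {mΩ : MeasurableSpace Ω} [MeasurableSpace α]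

theorem aux_past_le (Y : ℕ → Ω → α) (hY : ∀ i, Measurable (Y i)) (k : ℕ) : past Y k ≤ mΩ :=
  iSup₂_le fun i _ => (hY i).comap_le

theorem aux_comap_le_past (Y : ℕ → Ω → α) {k i : ℕ} (h : k ≤ i) :
    MeasurableSpace.comap (Y i) inferInstance ≤ past Y k :=
  le_iSup₂ (f := fun j (_ : j ≥ k) => MeasurableSpace.comap (Y j) inferInstance) i h

theorem aux_past_antitone (Y : ℕ → Ω → α) {k l : ℕ} (h : k ≤ l) : past Y l ≤ past Y k :=
  iSup₂_le fun i hi => aux_comap_le_past Y (le_trans h hi)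

theorem aux_measurable_past (Y : ℕ → Ω → α) {k i : ℕ} (h : k ≤ i) :
    Measurable[past Y k] (Y i) :=
  measurable_iff_comap_le.mpr (aux_comap_le_past Y h)

end AuxPast

section Tsirelson

variable {S : Type u} {G : Type v}
  [TopologicalSpace S] [CompactSpace S] [TopologicalSpace.MetrizableSpace S]
  [SecondCountableTopology S] [MeasurableSpace S] [BorelSpace S]
  [TopologicalSpace G] [CompactSpace G] [TopologicalSpace.MetrizableSpace G]
  [SecondCountableTopology G] [MeasurableSpace G] [BorelSpace G]
  [Semigroup G] [ContinuousMul G]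
  [SMul G S] [ContinuousSMul G S] [IsScalarTower G G S]

/-- The right coset `σH`. -/
def rightCosetOf {G : Type*} [Mul G] (H : Set G) (σ : G) : Set G := (fun h => σ * h) '' H

/-- The coset space `Σ/H`, as the quotient of `Σ` identifying elements with the same right
coset, equipped (automatically) with the quotient topology. -/
abbrev CosetSpace {G : Type*} [Mul G] (H : Set G) := Quotient (Setoid.ker (rightCosetOf H))

/-- Condition (P2'): `H` is a compact non-trivial subgroup of `Σ`; for every `k`, the law of
`N_{k,l}` converges weakly as `l → -∞` to a right `H`-invariant probability law `ν_k`, and the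
image of `N_{k,l}` in `Σ/H` converges a.s. as `l → -∞`. -/
structure CondP2' {Ω G : Type*} [MeasurableSpace Ω] [TopologicalSpace G] [Semigroup G]
    [MeasurableSpace G] (P : Measure Ω) (N : ℕ → Ω → G) (H : Set G) (ν : ℕ → Measure G) :
    Prop where
  compact : IsCompact H
  mul_mem : ∀ a ∈ H, ∀ b ∈ H, a * b ∈ H
  nontrivial : ∃ a ∈ H, ∃ b ∈ H, a ≠ b
  exists_identity_inverses : ∃ e ∈ H, (∀ h ∈ H, e * h = h ∧ h * e = h) ∧
    ∀ h ∈ H, ∃ h' ∈ H, h * h' = e ∧ h' * h = e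
  prob_ν : ∀ k, IsProbabilityMeasure (ν k)
  right_invariant : ∀ k, ∀ h ∈ H, (ν k).map (fun σ => σ * h) = ν k
  weak_conv : ∀ (n : ℕ) (f : C(G, ℝ)),
    Tendsto (fun j => ∫ σ, f σ ∂(P.map (prodN N n j))) atTop (𝓝 (∫ σ, f σ ∂(ν n)))
  coset_conv : ∀ n : ℕ, ∀ᵐ ω ∂P, ∃ q : CosetSpace H,
    Tendsto (fun j => Quotient.mk (Setoid.ker (rightCosetOf H)) (prodN N n j ω)) atTop (𝓝 q)

section AuxProd

variable {Ω : Type w} {mΩ : MeasurableSpace Ω}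

theorem aux_measurable_mul_comp {m : MeasurableSpace Ω} {f g : Ω → G}
    (hf : Measurable[m] f) (hg : Measurable[m] g) :
    Measurable[m] (fun ω => f ω * g ω) :=
  (continuous_mul.measurable : Measurable fun p : G × G => p.1 * p.2).comp (hf.prodMk hg)

theorem aux_measurable_prodN {m : MeasurableSpace Ω} {N : ℕ → Ω → G} {k : ℕ}
    (h : ∀ i, k ≤ i → Measurable[m] (N i)) : ∀ j, Measurable[m] (prodN N k j)
  | 0 => h k le_rfl
  | (j + 1) => aux_measurable_mul_comp (aux_measurable_prodN h j)
      (h (k + j + 1) (by omega))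

theorem aux_prodN_add (N : ℕ → Ω → G) (n j : ℕ) :
    ∀ i, ∀ ω, prodN N n (j + 1 + i) ω = prodN N n j ω * prodN N (n + j + 1) i ω := by
  intro i
  induction i with
  | zero => intro ω; rfl
  | succ i ih =>
    intro ω
    have harith : n + (j + 1 + i) + 1 = n + j + 1 + i + 1 := by omega
    show prodN N n (j + 1 + i) ω * N (n + (j + 1 + i) + 1) ω = _
    rw [ih ω, harith, mul_assoc]
    rfl

theorem aux_indep_prodN {P : Measure Ω} [IsProbabilityMeasure P] {μ : ℕ → Measure G}
    {X : ℕ → Ω → S} {N : ℕ → Ω → G} (hsol : IsSolution P μ X N) (k : ℕ) :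
    ∀ j, Indep (MeasurableSpace.comap (prodN N k j) inferInstance)
      (past X (k + j + 1) ⊔ past N (k + j + 1)) P
  | 0 => hsol.indep k
  | (j + 1) => by
    have hN : ∀ i, Measurable (N i) := hsol.measurable_N
    have hX : ∀ i, Measurable (X i) := hsol.measurable_X
    have hstep : MeasurableSpace.comap (prodN N k (j + 1)) inferInstance ≤
        MeasurableSpace.comap (prodN N k j) inferInstance ⊔
          MeasurableSpace.comap (N (k + j + 1)) inferInstance := by
      refine measurable_iff_comap_le.mp ?_
      exact aux_measurable_mul_comp (measurable_iff_comap_le.mpr le_sup_left)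
        (measurable_iff_comap_le.mpr le_sup_right)
    refine aux_indep_mono_left ?_ hstep
    refine aux_indep_sup ((aux_measurable_prodN (m := mΩ) (fun i _ => hN i) j).comap_le)
      ((hN (k + j + 1)).comap_le)
      (sup_le (aux_past_le X hX _) (aux_past_le N hN _))
      (aux_indep_prodN hsol k j) (hsol.indep (k + j + 1))
      (le_trans (aux_comap_le_past N le_rfl) le_sup_right)
      (sup_le (le_trans (aux_past_antitone X (Nat.le_succ _)) le_sup_left)
        (le_trans (aux_past_antitone N (Nat.le_succ _)) le_sup_right))

end AuxProd

set_option maxHeartbeats 2000000 in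
/-- Under (P2'), an extremal solution whose marginals are `ν_k * δ_x` with
`Hx` a singleton is strong. -/
theorem tsirelson_P2'_singleton_orbit_strong
    {Ω : Type w} [MeasurableSpace Ω] (P : Measure Ω) [IsProbabilityMeasure P]
    (μ : ℕ → Measure G) (hμ : ∀ k, IsProbabilityMeasure (μ k))
    (X : ℕ → Ω → S) (N : ℕ → Ω → G) (hsol : IsSolution P μ X N)
    (H : Set G) (ν : ℕ → Measure G) (hP2 : CondP2' P N H ν)
    (hext : TailTrivial P fun k => past X k ⊔ past N k)
    (x : S) (hlaw : ∀ k, P.map (X k) = conv (ν k) (Measure.dirac x))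
    (hHx : Set.Subsingleton ((fun h : G => h • x) '' H)) :
    IsStrong P X N := by
  classical
  have hNmeas := hsol.measurable_N
  have hXmeas := hsol.measurable_X
  obtain ⟨e, heH, hid, hinv⟩ := hP2.exists_identity_inverses
  set y : S := e • x with hy
  have hHy : ∀ h ∈ H, h • x = y := fun h hh => hHx ⟨h, hh, rfl⟩ ⟨e, heH, rfl⟩
  have hmul_smul : ∀ (a b : G) (z : S), (a * b) • z = a • (b • z) := fun a b z => by
    rw [← smul_eq_mul, smul_assoc]
  -- the map `σH ↦ σ • y` on the coset space
  have hresp : ∀ σ σ' : G, Setoid.ker (rightCosetOf H) σ σ' → σ • y = σ' • y := by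
    intro σ σ' hσ
    have h2 : σ * e ∈ rightCosetOf H σ' := by
      rw [← (hσ : rightCosetOf H σ = rightCosetOf H σ')]; exact ⟨e, heH, rfl⟩
    obtain ⟨h, hh, hhe⟩ := h2
    calc σ • y = (σ * e) • x := by rw [hmul_smul]
      _ = (σ' * h) • x := by rw [show σ * e = σ' * h from hhe.symm]
      _ = σ' • (h • x) := by rw [hmul_smul]
      _ = σ' • y := by rw [hHy h hh]
  set φ : CosetSpace H → S := Quotient.lift (fun σ : G => σ • y) hresp with hφ
  have hφcont : Continuous φ :=
    Continuous.quotient_lift (continuous_id.smul continuous_const) hresp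
  -- metric and Polish structure on S
  letI : MetricSpace S := TopologicalSpace.metrizableSpaceMetric S
  haveI : PolishSpace S := inferInstance
  -- measurability helpers
  have hsmul_y_meas : ∀ {m' : MeasurableSpace Ω} (f : Ω → G), Measurable[m'] f →
      Measurable[m'] (fun ω => f ω • y) := by
    intro m' f hf
    exact ((continuous_id.smul continuous_const).measurable :
      Measurable fun g : G => g • y).comp hf
  have hNpast : ∀ m i, m ≤ i → Measurable[past N m] (N i) := fun m i h =>
    aux_measurable_past N h
  have hWm : ∀ m i, Measurable[past N m] (fun ω => prodN N m i ω • y) := fun m i =>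
    hsmul_y_meas _ (aux_measurable_prodN (hNpast m) i)
  have hprodNmeas : ∀ m i, Measurable (prodN N m i) := fun m i =>
    aux_measurable_prodN (fun i _ => hNmeas i) i
  -- good sets
  set good : ℕ → Set Ω :=
    (fun m => {ω | ∃ c, Tendsto (fun i => prodN N m i ω • y) atTop (𝓝 c)}) with hgood
  have hgoodmeas : ∀ m, MeasurableSet[past N m] (good m) := by
    intro m
    letI : MeasurableSpace Ω := past N m
    exact measurableSet_exists_tendsto (fun i => hWm m i)
  have hgoodae : ∀ m, ∀ᵐ ω ∂P, ω ∈ good m := by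
    intro m
    filter_upwards [hP2.coset_conv m] with ω hω
    obtain ⟨q, hq⟩ := hω
    exact ⟨φ q, (hφcont.tendsto q).comp hq⟩
  set W : ℕ → ℕ → Ω → S :=
    (fun m i ω => if ω ∈ good m then prodN N m i ω • y else y) with hWdef
  have hWmeas : ∀ m i, Measurable[past N m] (W m i) := fun m i =>
    Measurable.ite (hgoodmeas m) (hWm m i) measurable_const
  have hWlim : ∀ m ω, ∃ c, Tendsto (fun i => W m i ω) atTop (𝓝 c) := by
    intro m ω
    by_cases h : ω ∈ good m
    · have heq : (fun i => W m i ω) = fun i => prodN N m i ω • y :=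
        funext fun i => if_pos h
      obtain ⟨c, hc⟩ := h
      exact ⟨c, heq ▸ hc⟩
    · have heq : (fun i => W m i ω) = fun _ => y := funext fun i => if_neg h
      exact ⟨y, heq ▸ tendsto_const_nhds⟩
  set Y : ℕ → Ω → S := (fun m ω => (hWlim m ω).choose) with hYdef
  have hYtend : ∀ m ω, Tendsto (fun i => W m i ω) atTop (𝓝 (Y m ω)) := fun m ω =>
    (hWlim m ω).choose_spec
  have hYmeas : ∀ m, Measurable[past N m] (Y m) := by
    intro m
    letI : MeasurableSpace Ω := past N m
    exact measurable_of_tendsto_metrizable (fun i => hWmeas m i)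
      (tendsto_pi_nhds.2 (hYtend m))
  have hYamb : ∀ m, Measurable (Y m) := fun m =>
    (hYmeas m).mono (aux_past_le N hNmeas m) le_rfl
  have hWamb : ∀ m i, Measurable (W m i) := fun m i =>
    (hWmeas m i).mono (aux_past_le N hNmeas m) le_rfl
  have hYtend' : ∀ m, ∀ᵐ ω ∂P, Tendsto (fun i => prodN N m i ω • y) atTop (𝓝 (Y m ω)) := by
    intro m
    filter_upwards [hgoodae m] with ω hω
    have heq : (fun i => W m i ω) = fun i => prodN N m i ω • y := funext fun i => if_pos hω
    exact heq ▸ hYtend m ω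
  -- splitting identities
  have hYsplit : ∀ kk j, ∀ᵐ ω ∂P, Y kk ω = prodN N kk j ω • Y (kk + j + 1) ω := by
    intro kk j
    filter_upwards [hYtend' kk, hYtend' (kk + j + 1)] with ω h1 h2
    have hsub : Tendsto (fun i : ℕ => j + 1 + i) atTop atTop := by
      refine tendsto_atTop_atTop.2 fun b => ⟨b, fun a ha => by omega⟩
    have ha : Tendsto (fun i => prodN N kk (j + 1 + i) ω • y) atTop (𝓝 (Y kk ω)) :=
      h1.comp hsub
    have hb : Tendsto (fun i => prodN N kk j ω • (prodN N (kk + j + 1) i ω • y)) atTop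
        (𝓝 (prodN N kk j ω • Y (kk + j + 1) ω)) :=
      ((continuous_const.smul continuous_id).tendsto _).comp h2
    have heq : (fun i => prodN N kk (j + 1 + i) ω • y) =
        fun i => prodN N kk j ω • (prodN N (kk + j + 1) i ω • y) := by
      funext i; rw [aux_prodN_add, hmul_smul]
    rw [heq] at ha
    exact tendsto_nhds_unique ha hb
  -- the laws of X m and Y m integrated against continuous functions
  set θ : ℕ → ℕ → Measure G := (fun m i => P.map (prodN N m i)) with hθdef
  haveI hθprob : ∀ m i, IsProbabilityMeasure (θ m i) := fun m i =>
    Measure.isProbabilityMeasure_map (hprodNmeas m i).aemeasurable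
  have hmx : Measurable fun σ : G => σ • x := by
    exact (continuous_id.smul continuous_const).measurable
  have hmy : Measurable fun σ : G => σ • y := by
    exact (continuous_id.smul continuous_const).measurable
  have hme : Measurable fun σ : G => σ * e := by
    exact (continuous_id.mul continuous_const).measurable
  have hcy : Continuous fun σ : G => σ • y := continuous_id.smul continuous_const
  have hlawX : ∀ m (g : C(S, ℝ)), ∫ ω, g (X m ω) ∂P = ∫ σ, g (σ • y) ∂(ν m) := by
    intro m g
    haveI := hP2.prob_ν m
    have h1 : ∫ ω, g (X m ω) ∂P = ∫ z, g z ∂(P.map (X m)) :=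
      (integral_map (hXmeas m).aemeasurable g.continuous.aestronglyMeasurable).symm
    have hconv : conv (ν m) (Measure.dirac x) = (ν m).map (fun σ => σ • x) := by
      rw [conv, MeasureTheory.Measure.prod_dirac]
      rw [Measure.map_map (continuous_smul.measurable) measurable_prodMk_right]
      rfl
    rw [h1, hlaw m, hconv,
      integral_map hmx.aemeasurable g.continuous.aestronglyMeasurable]
    conv_lhs => rw [← hP2.right_invariant m e heH]
    rw [integral_map (f := fun σ : G => g (σ • x)) hme.aemeasurable
      (by exact (g.continuous.comp (continuous_id.smul continuous_const)).aestronglyMeasurable)]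
    congr 1
    funext σ
    rw [hmul_smul]
  have hWcongr : ∀ m i (g : C(S, ℝ)),
      ∫ ω, g (W m i ω) ∂P = ∫ σ, g (σ • y) ∂(θ m i) := by
    intro m i g
    have h1 : ∫ ω, g (W m i ω) ∂P = ∫ ω, g (prodN N m i ω • y) ∂P := by
      apply integral_congr_ae
      filter_upwards [hgoodae m] with ω hω
      rw [show W m i ω = prodN N m i ω • y from if_pos hω]
    rw [h1, hθdef]
    exact (integral_map (hprodNmeas m i).aemeasurable
      (g.continuous.comp (continuous_id.smul continuous_const)).aestronglyMeasurable).symm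
  have hWtendsto : ∀ m (g : C(S, ℝ)),
      Tendsto (fun i => ∫ ω, g (W m i ω) ∂P) atTop (𝓝 (∫ ω, g (Y m ω) ∂P)) := by
    intro m g
    apply tendsto_integral_of_dominated_convergence (fun _ => ‖g‖)
    · intro i
      exact (g.continuous.measurable.comp (hWamb m i)).aestronglyMeasurable
    · exact integrable_const _
    · intro i
      exact ae_of_all _ fun ω => g.norm_coe_le_norm _
    · exact ae_of_all _ fun ω => (g.continuous.tendsto _).comp (hYtend m ω)
  have hlawY : ∀ m (g : C(S, ℝ)), ∫ ω, g (Y m ω) ∂P = ∫ σ, g (σ • y) ∂(ν m) := by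
    intro m g
    have h4 : Tendsto (fun i => ∫ σ, g (σ • y) ∂(θ m i)) atTop
        (𝓝 (∫ σ, g (σ • y) ∂(ν m))) :=
      hP2.weak_conv m ⟨fun σ => g (σ • y),
        g.continuous.comp (continuous_id.smul continuous_const)⟩
    have h2 := hWtendsto m g
    simp_rw [hWcongr m _ g] at h2
    exact tendsto_nhds_unique h2 h4
  -- now fix k and prove strongness at k
  intro k
  refine ⟨Y k, hYmeas k, ?_⟩
  have hXsplit : ∀ j, X k =ᵐ[P] fun ω => prodN N k j ω • X (k + j + 1) ω := by
    intro j
    induction j with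
    | zero => exact hsol.eqn k
    | succ j ih =>
      filter_upwards [ih, hsol.eqn (k + j + 1)] with ω h1 h2
      show X k ω = prodN N k (j + 1) ω • X (k + j + 1 + 1) ω
      have h3 : prodN N k (j + 1) ω • X (k + j + 1 + 1) ω =
          prodN N k j ω • (N (k + j + 1) ω • X (k + j + 1 + 1) ω) := by
        rw [show prodN N k (j + 1) ω = prodN N k j ω * N (k + j + 1) ω from rfl, hmul_smul]
      rw [h3, ← h2]
      exact h1
  -- key identity via independence
  have hKI : ∀ (f : C(S, ℝ)) (j : ℕ),
      (∫ ω, f (X k ω) * f (prodN N k j ω • y) ∂P) =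
        ∫ ω, f (Y k ω) * f (prodN N k j ω • y) ∂P := by
    intro f j
    have hFcont : Continuous fun p : G × S => f (p.1 • p.2) * f (p.1 • y) := by
      have h1 : Continuous fun p : G × S => p.1 • p.2 := continuous_smul
      exact (f.continuous.comp h1).mul
        (f.continuous.comp (hcy.comp continuous_fst))
    set F : G × S → ℝ := fun p => f (p.1 • p.2) * f (p.1 • y) with hFdef
    have hFbdd : ∀ p, ‖F p‖ ≤ ‖f‖ * ‖f‖ := by
      intro p
      calc ‖F p‖ ≤ ‖f (p.1 • p.2)‖ * ‖f (p.1 • y)‖ := norm_mul_le _ _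
        _ ≤ ‖f‖ * ‖f‖ :=
            mul_le_mul (f.norm_coe_le_norm _) (f.norm_coe_le_norm _)
              (norm_nonneg _) (norm_nonneg _)
    set Gj : S → ℝ := fun z => ∫ σ, F (σ, z) ∂(θ k j) with hGjdef
    have hGcont : Continuous Gj := by
      apply continuous_of_dominated (bound := fun _ => ‖f‖ * ‖f‖)
      · intro z
        exact (hFcont.comp (Continuous.prodMk_left z)).aestronglyMeasurable
      · intro z
        exact ae_of_all _ fun σ => hFbdd _
      · exact integrable_const _
      · exact ae_of_all _ fun σ => hFcont.comp (Continuous.prodMk_right σ)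
    have hGbdd : ∀ z, ‖Gj z‖ ≤ ‖f‖ * ‖f‖ := by
      intro z
      calc ‖Gj z‖ ≤ ‖f‖ * ‖f‖ * ((θ k j) Set.univ).toReal :=
            norm_integral_le_of_norm_le_const (ae_of_all _ fun σ => hFbdd _)
        _ = ‖f‖ * ‖f‖ := by simp
    have hmain : ∀ (Z : Ω → S), Measurable Z →
        MeasurableSpace.comap Z inferInstance ≤ past X (k + j + 1) ⊔ past N (k + j + 1) →
        ∫ ω, F (prodN N k j ω, Z ω) ∂P = ∫ ω, Gj (Z ω) ∂P := by
      intro Z hZ hZle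
      haveI : IsProbabilityMeasure (P.map Z) := Measure.isProbabilityMeasure_map hZ.aemeasurable
      have hindep : IndepFun (prodN N k j) Z P :=
        aux_indep_mono_right (aux_indep_prodN hsol k j) hZle
      have hmap : P.map (fun ω => (prodN N k j ω, Z ω)) = (θ k j).prod (P.map Z) :=
        (indepFun_iff_map_prod_eq_prod_map_map (hprodNmeas k j).aemeasurable
          hZ.aemeasurable).1 hindep
      have hFint : Integrable F ((θ k j).prod (P.map Z)) :=
        Integrable.mono' (integrable_const (‖f‖ * ‖f‖)) hFcont.aestronglyMeasurable
          (ae_of_all _ hFbdd)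
      calc ∫ ω, F (prodN N k j ω, Z ω) ∂P
          = ∫ p, F p ∂(P.map (fun ω => (prodN N k j ω, Z ω))) :=
            (integral_map ((hprodNmeas k j).prodMk hZ).aemeasurable
              hFcont.aestronglyMeasurable).symm
        _ = ∫ p, F p ∂((θ k j).prod (P.map Z)) := by rw [hmap]
        _ = ∫ σ, ∫ z, F (σ, z) ∂(P.map Z) ∂(θ k j) := integral_prod F hFint
        _ = ∫ z, ∫ σ, F (σ, z) ∂(θ k j) ∂(P.map Z) := integral_integral_swap hFint
        _ = ∫ ω, Gj (Z ω) ∂P :=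
            integral_map hZ.aemeasurable hGcont.aestronglyMeasurable
    have hXside : ∫ ω, f (X k ω) * f (prodN N k j ω • y) ∂P = ∫ ω, Gj (X (k + j + 1) ω) ∂P := by
      have h0 : ∫ ω, f (X k ω) * f (prodN N k j ω • y) ∂P =
          ∫ ω, F (prodN N k j ω, X (k + j + 1) ω) ∂P := by
        apply integral_congr_ae
        filter_upwards [hXsplit j] with ω hω
        rw [hFdef]
        simp only
        rw [← hω]
      rw [h0]
      exact hmain (X (k + j + 1)) (hXmeas (k + j + 1))
        (le_trans (aux_comap_le_past X le_rfl) le_sup_left)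
    have hYside : ∫ ω, f (Y k ω) * f (prodN N k j ω • y) ∂P = ∫ ω, Gj (Y (k + j + 1) ω) ∂P := by
      have h0 : ∫ ω, f (Y k ω) * f (prodN N k j ω • y) ∂P =
          ∫ ω, F (prodN N k j ω, Y (k + j + 1) ω) ∂P := by
        apply integral_congr_ae
        filter_upwards [hYsplit k j] with ω hω
        rw [hFdef]
        simp only
        rw [← hω]
      rw [h0]
      exact hmain (Y (k + j + 1)) (hYamb (k + j + 1))
        (le_trans (measurable_iff_comap_le.mp (hYmeas (k + j + 1))) le_sup_right)
    rw [hXside, hYside]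
    have hgx := hlawX (k + j + 1) ⟨Gj, hGcont⟩
    have hgy := hlawY (k + j + 1) ⟨Gj, hGcont⟩
    simp only [ContinuousMap.coe_mk] at hgx hgy
    rw [hgx, hgy]
  -- for every continuous f, f(X_k) = f(Y_k) a.s.
  have hfinal : ∀ f : C(S, ℝ), ∀ᵐ ω ∂P, f (X k ω) = f (Y k ω) := by
    intro f
    have hfX : Measurable fun ω => f (X k ω) := f.continuous.measurable.comp (hXmeas k)
    have hfY : Measurable fun ω => f (Y k ω) := f.continuous.measurable.comp (hYamb k)
    have hbddf : ∀ z : S, ‖f z‖ ≤ ‖f‖ := fun z => f.norm_coe_le_norm z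
    have hprodf : ∀ (a b : ℝ), ‖a‖ ≤ ‖f‖ → ‖b‖ ≤ ‖f‖ → ‖a * b‖ ≤ ‖f‖ * ‖f‖ := by
      intro a b ha hb
      calc ‖a * b‖ ≤ ‖a‖ * ‖b‖ := norm_mul_le _ _
        _ ≤ ‖f‖ * ‖f‖ := mul_le_mul ha hb (norm_nonneg _) (norm_nonneg _)
    -- the sequence T j = ∫ f(X_k) f(prodN_j • y)
    have haetend : ∀ᵐ ω ∂P, Tendsto (fun j => prodN N k j ω • y) atTop (𝓝 (Y k ω)) :=
      hYtend' k
    have hT1 : Tendsto (fun j => ∫ ω, f (X k ω) * f (prodN N k j ω • y) ∂P) atTop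
        (𝓝 (∫ ω, f (X k ω) * f (Y k ω) ∂P)) := by
      apply tendsto_integral_of_dominated_convergence (fun _ => ‖f‖ * ‖f‖)
      · intro j
        exact (hfX.mul (f.continuous.measurable.comp
          (hsmul_y_meas _ (hprodNmeas k j)))).aestronglyMeasurable
      · exact integrable_const _
      · intro j
        exact ae_of_all _ fun ω => hprodf _ _ (hbddf _) (hbddf _)
      · filter_upwards [haetend] with ω hω
        exact (tendsto_const_nhds.mul ((f.continuous.tendsto _).comp hω))
    have hT2 : Tendsto (fun j => ∫ ω, f (Y k ω) * f (prodN N k j ω • y) ∂P) atTop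
        (𝓝 (∫ ω, f (Y k ω) * f (Y k ω) ∂P)) := by
      apply tendsto_integral_of_dominated_convergence (fun _ => ‖f‖ * ‖f‖)
      · intro j
        exact (hfY.mul (f.continuous.measurable.comp
          (hsmul_y_meas _ (hprodNmeas k j)))).aestronglyMeasurable
      · exact integrable_const _
      · intro j
        exact ae_of_all _ fun ω => hprodf _ _ (hbddf _) (hbddf _)
      · filter_upwards [haetend] with ω hω
        exact (tendsto_const_nhds.mul ((f.continuous.tendsto _).comp hω))
    have hE1 : ∫ ω, f (X k ω) * f (Y k ω) ∂P = ∫ ω, f (Y k ω) * f (Y k ω) ∂P := by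
      refine tendsto_nhds_unique ?_ hT2
      have : (fun j => ∫ ω, f (Y k ω) * f (prodN N k j ω • y) ∂P) =
          fun j => ∫ ω, f (X k ω) * f (prodN N k j ω • y) ∂P := by
        funext j; exact (hKI f j).symm
      rw [this] at hT2 ⊢
      exact hT1
    -- squares
    set g2 : C(S, ℝ) := ⟨fun z => f z * f z, f.continuous.mul f.continuous⟩ with hg2
    have hE2 : ∫ ω, f (Y k ω) * f (Y k ω) ∂P = ∫ σ, f (σ • y) * f (σ • y) ∂(ν k) := by
      have := hlawY k g2
      simpa only [hg2, ContinuousMap.coe_mk] using this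
    have hE3 : ∫ ω, f (X k ω) * f (X k ω) ∂P = ∫ σ, f (σ • y) * f (σ • y) ∂(ν k) := by
      have := hlawX k g2
      simpa only [hg2, ContinuousMap.coe_mk] using this
    -- integrabilities
    have hiXX : Integrable (fun ω => f (X k ω) * f (X k ω)) P :=
      Integrable.mono' (integrable_const (‖f‖ * ‖f‖)) (hfX.mul hfX).aestronglyMeasurable
        (ae_of_all _ fun ω => hprodf _ _ (hbddf _) (hbddf _))
    have hiXY : Integrable (fun ω => f (X k ω) * f (Y k ω)) P :=
      Integrable.mono' (integrable_const (‖f‖ * ‖f‖)) (hfX.mul hfY).aestronglyMeasurable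
        (ae_of_all _ fun ω => hprodf _ _ (hbddf _) (hbddf _))
    have hiYY : Integrable (fun ω => f (Y k ω) * f (Y k ω)) P :=
      Integrable.mono' (integrable_const (‖f‖ * ‖f‖)) (hfY.mul hfY).aestronglyMeasurable
        (ae_of_all _ fun ω => hprodf _ _ (hbddf _) (hbddf _))
    have hzero : ∫ ω, (f (X k ω) - f (Y k ω)) ^ 2 ∂P = 0 := by
      have hrw : (fun ω => (f (X k ω) - f (Y k ω)) ^ 2) =
          fun ω => (f (X k ω) * f (X k ω) - 2 * (f (X k ω) * f (Y k ω))) +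
            f (Y k ω) * f (Y k ω) := by
        funext ω; ring
      rw [hrw]
      have hadd : ∫ ω, (f (X k ω) * f (X k ω) - 2 * (f (X k ω) * f (Y k ω))) +
            f (Y k ω) * f (Y k ω) ∂P =
          (∫ ω, f (X k ω) * f (X k ω) - 2 * (f (X k ω) * f (Y k ω)) ∂P) +
            ∫ ω, f (Y k ω) * f (Y k ω) ∂P :=
        integral_add (hiXX.sub (hiXY.const_mul 2)) hiYY
      have hsub2 : ∫ ω, f (X k ω) * f (X k ω) - 2 * (f (X k ω) * f (Y k ω)) ∂P =
          (∫ ω, f (X k ω) * f (X k ω) ∂P) - ∫ ω, 2 * (f (X k ω) * f (Y k ω)) ∂P :=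
        integral_sub hiXX (hiXY.const_mul 2)
      have hcm : ∫ ω, 2 * (f (X k ω) * f (Y k ω)) ∂P =
          2 * ∫ ω, f (X k ω) * f (Y k ω) ∂P := integral_const_mul _ _
      rw [hadd, hsub2, hcm, hE1, hE2, hE3]
      ring
    have hnn : 0 ≤ᵐ[P] fun ω => (f (X k ω) - f (Y k ω)) ^ 2 :=
      ae_of_all _ fun ω => sq_nonneg _
    have hint2 : Integrable (fun ω => (f (X k ω) - f (Y k ω)) ^ 2) P := by
      have hrw : (fun ω => (f (X k ω) - f (Y k ω)) ^ 2) =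
          fun ω => (f (X k ω) * f (X k ω) - 2 * (f (X k ω) * f (Y k ω))) +
            f (Y k ω) * f (Y k ω) := by
        funext ω; ring
      rw [hrw]
      exact (hiXX.sub (hiXY.const_mul 2)).add hiYY
    have haez := (integral_eq_zero_iff_of_nonneg_ae hnn hint2).1 hzero
    filter_upwards [haez] with ω hω
    have h0 : (f (X k ω) - f (Y k ω)) ^ 2 = 0 := hω
    exact sub_eq_zero.mp (sq_eq_zero_iff.mp h0)
  -- separating family of continuous functions
  haveI : Nonempty S := ⟨x⟩
  have hdense := TopologicalSpace.denseRange_denseSeq S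
  set u : ℕ → S := TopologicalSpace.denseSeq S with hu
  have hall : ∀ᵐ ω ∂P, ∀ n : ℕ, dist (X k ω) (u n) = dist (Y k ω) (u n) :=
    ae_all_iff.2 fun n => hfinal ⟨fun z => dist z (u n), continuous_id.dist continuous_const⟩
  filter_upwards [hall] with ω hω
  apply eq_of_forall_dist_le
  intro ε hε
  obtain ⟨n, hn⟩ := Metric.denseRange_iff.1 hdense (X k ω) (ε / 2) (by linarith)
  calc dist (X k ω) (Y k ω) ≤ dist (X k ω) (u n) + dist (u n) (Y k ω) := dist_triangle _ _ _
    _ = dist (X k ω) (u n) + dist (X k ω) (u n) := by rw [dist_comm (u n), ← hω n]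
    _ ≤ ε := by linarith [hn]


end Tsirelson
end
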